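/- arXiv:1704.08608 — 16 statements merged into one kernel-verified Lean document; each statement's English description precedes it below -/
import Mathlib

section
/- Let X be a complete metric space, Y a metric space, and f : X → Y a continuous function. Suppose that for every ε > 0 there exists δ > 0 such that for every x ∈ X one has B(f(x), δ) ⊆ closure(f(B(x, ε))). Then f is uniformly open, i.e., for every ε > 0 there exists δ > 0 such that for every x ∈ X one has B(f(x), δ) ⊆ f(B(x, ε)). -/
open Metric Filter

/-- **Schauder's lemma.** If `X` is a complete metric space and `f : X → Y` is continuous
and uniformly *almost* open (every ball `B(f x, δ)` is contained in the closure of the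
image of `B(x, ε)`, with `δ` depending only on `ε`), then `f` is uniformly open. -/
theorem schauder_uniformly_open
    {X Y : Type*} [MetricSpace X] [CompleteSpace X] [MetricSpace Y]
    (f : X → Y) (hf : Continuous f)
    (h : ∀ ε > 0, ∃ δ > 0, ∀ x : X,
        Metric.ball (f x) δ ⊆ closure (f '' Metric.ball x ε)) :
    ∀ ε > 0, ∃ δ > 0, ∀ x : X,
        Metric.ball (f x) δ ⊆ f '' Metric.ball x ε := by
  intro ε hε
  -- choose δ n ≤ (1/2)^n for radius ε/2^(n+2)
  have key : ∀ n : ℕ, ∃ d : ℝ, 0 < d ∧ d ≤ (1/2 : ℝ)^n ∧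
      ∀ x : X, Metric.ball (f x) d ⊆ closure (f '' Metric.ball x (ε / 2 ^ (n + 2))) := by
    intro n
    obtain ⟨d, hd, hball⟩ := h (ε / 2 ^ (n + 2)) (by positivity)
    refine ⟨min d ((1/2 : ℝ)^n), lt_min hd (by positivity), min_le_right _ _, fun x => ?_⟩
    exact (Metric.ball_subset_ball (min_le_left _ _)).trans (hball x)
  choose δ hδpos hδle hδ using key
  refine ⟨δ 0, hδpos 0, fun x y hy => ?_⟩
  -- construction step
  have hstep : ∀ (n : ℕ) (z : X), dist (f z) y < δ n →
      ∃ z', dist z' z < ε / 2 ^ (n + 2) ∧ dist (f z') y < δ (n + 1) := by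
    intro n z hz
    have hy' : y ∈ closure (f '' Metric.ball z (ε / 2 ^ (n + 2))) :=
      hδ n z (by simpa [Metric.mem_ball, dist_comm] using hz)
    rw [Metric.mem_closure_iff] at hy'
    obtain ⟨w, hw, hwy⟩ := hy' (δ (n + 1)) (hδpos (n + 1))
    obtain ⟨z', hz', rfl⟩ := hw
    exact ⟨z', by simpa [Metric.mem_ball] using hz', by simpa [dist_comm] using hwy⟩
  have hx0 : dist (f x) y < δ 0 := by simpa [Metric.mem_ball, dist_comm] using hy
  let u : ∀ _ : ℕ, {z : X // dist (f z) y < δ _} := fun n =>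
    Nat.rec (motive := fun n => {z : X // dist (f z) y < δ n}) ⟨x, hx0⟩
      (fun n p => ⟨(hstep n p.1 p.2).choose, (hstep n p.1 p.2).choose_spec.2⟩) n
  have hdist : ∀ n, dist ((u n).1) ((u (n + 1)).1) < ε / 2 ^ (n + 2) := by
    intro n
    have := (hstep n (u n).1 (u n).2).choose_spec.1
    rw [dist_comm] at this
    exact this
  have hdist' : ∀ n, dist ((u n).1) ((u (n + 1)).1) ≤ (ε / 4) * (1/2 : ℝ)^n := by
    intro n
    refine (hdist n).le.trans (le_of_eq ?_)
    rw [div_pow, one_pow, pow_add]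
    ring
  have hr : (1/2 : ℝ) < 1 := by norm_num
  have hcauchy : CauchySeq (fun n => (u n).1) := cauchySeq_of_le_geometric _ _ hr hdist'
  obtain ⟨x', hx'⟩ := cauchySeq_tendsto_of_complete hcauchy
  have hd0 : dist x x' ≤ (ε / 4) / (1 - 1/2) :=
    dist_le_of_le_geometric_of_tendsto₀ _ _ hr hdist' hx'
  have hxx' : dist x x' < ε := by
    have : (ε / 4) / (1 - 1/2 : ℝ) = ε / 2 := by ring
    rw [this] at hd0
    linarith
  have hfy : Tendsto (fun n => f ((u n).1)) atTop (nhds y) := by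
    rw [tendsto_iff_dist_tendsto_zero]
    refine squeeze_zero (fun n => dist_nonneg) (fun n => ((u n).2.le.trans (hδle n)))
      (tendsto_pow_atTop_nhds_zero_of_lt_one (by norm_num) (by norm_num))
  have hfx' : Tendsto (fun n => f ((u n).1)) atTop (nhds (f x')) :=
    (hf.tendsto x').comp hx'
  have : f x' = y := tendsto_nhds_unique hfx' hfy
  exact ⟨x', by simpa [Metric.mem_ball, dist_comm] using hxx', this⟩
end

section
/- Let A be a unital Banach algebra (over ℝ or ℂ). The following are equivalent: (i) the set of invertible elements of A is dense in A; (ii) the set of left-invertible elements of A (elements a for which there exists x ∈ A with x·a = 1) is dense in A; (iii) the set of right-invertible elements of A (elements a for which there exists x ∈ A with a·x = 1) is dense in A. Moreover, if any of these conditions holds, then every left-invertible element of A is invertible and every right-invertible element of A is invertible. -/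
section Aux

variable {A : Type*} [NormedRing A] [CompleteSpace A]

lemma aux_unit_of_norm_lt {b : A} (h : ‖b - 1‖ < 1) : IsUnit b := by
  have h' : ‖(1 : A) - b‖ < 1 := by rwa [norm_sub_rev]
  have := (Units.oneSub (1 - b) h').isUnit
  simpa using this

/-- If the left-invertible elements are dense, every left-invertible element is a unit. -/
lemma aux_left (h : Dense {a : A | ∃ x : A, x * a = 1}) :
    ∀ a : A, (∃ x : A, x * a = 1) → IsUnit a := by
  rintro a ⟨x, hx⟩
  have hε : (0 : ℝ) < 1 / (‖a‖ + 1) := by positivity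
  obtain ⟨c, ⟨d, hd⟩, hdist⟩ := h.exists_dist_lt x hε
  have hcx : ‖c - x‖ < 1 / (‖a‖ + 1) := by rwa [dist_comm, dist_eq_norm] at hdist
  have hca : ‖c * a - 1‖ < 1 := by
    have h1 : c * a - 1 = (c - x) * a := by rw [sub_mul, hx]
    rw [h1]
    calc ‖(c - x) * a‖ ≤ ‖c - x‖ * ‖a‖ := norm_mul_le _ _
      _ ≤ ‖c - x‖ * (‖a‖ + 1) := by
          have := norm_nonneg (c - x); nlinarith
      _ < (1 / (‖a‖ + 1)) * (‖a‖ + 1) := by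
          have h2 : (0 : ℝ) < ‖a‖ + 1 := by positivity
          exact mul_lt_mul_of_pos_right hcx h2
      _ = 1 := by field_simp
  have hu : IsUnit (c * a) := aux_unit_of_norm_lt hca
  -- c has left inverse d and right inverse a * (c*a)⁻¹, hence c is a unit
  set e : A := a * ↑hu.unit⁻¹ with he
  have hce : c * e = 1 := by
    rw [he, ← mul_assoc]
    calc (c * a) * ↑hu.unit⁻¹ = ↑hu.unit * ↑hu.unit⁻¹ := by rw [hu.unit_spec]
      _ = 1 := hu.unit.mul_inv
  have hed : e = d := by
    calc e = (d * c) * e := by rw [hd, one_mul]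
      _ = d * (c * e) := by rw [mul_assoc]
      _ = d := by rw [hce, mul_one]
  have hcu : IsUnit c := ⟨⟨c, e, hce, by rw [hed, hd]⟩, rfl⟩
  have ha : a = ↑hcu.unit⁻¹ * (c * a) := by
    conv_lhs => rw [← one_mul a, ← hcu.unit.inv_mul, hcu.unit_spec, mul_assoc]
  rw [ha]
  exact (hcu.unit⁻¹.isUnit).mul hu

/-- If the right-invertible elements are dense, every right-invertible element is a unit. -/
lemma aux_right (h : Dense {a : A | ∃ x : A, a * x = 1}) :
    ∀ a : A, (∃ x : A, a * x = 1) → IsUnit a := by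
  rintro a ⟨x, hx⟩
  have hε : (0 : ℝ) < 1 / (‖a‖ + 1) := by positivity
  obtain ⟨c, ⟨d, hd⟩, hdist⟩ := h.exists_dist_lt x hε
  have hcx : ‖c - x‖ < 1 / (‖a‖ + 1) := by rwa [dist_comm, dist_eq_norm] at hdist
  have hca : ‖a * c - 1‖ < 1 := by
    have h1 : a * c - 1 = a * (c - x) := by rw [mul_sub, hx]
    rw [h1]
    calc ‖a * (c - x)‖ ≤ ‖a‖ * ‖c - x‖ := norm_mul_le _ _
      _ ≤ (‖a‖ + 1) * ‖c - x‖ := by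
          have := norm_nonneg (c - x); nlinarith
      _ < (‖a‖ + 1) * (1 / (‖a‖ + 1)) := by
          have h2 : (0 : ℝ) < ‖a‖ + 1 := by positivity
          exact mul_lt_mul_of_pos_left hcx h2
      _ = 1 := by field_simp
  have hu : IsUnit (a * c) := aux_unit_of_norm_lt hca
  set e : A := ↑hu.unit⁻¹ * a with he
  have hce : e * c = 1 := by
    rw [he, mul_assoc]
    calc ↑hu.unit⁻¹ * (a * c) = ↑hu.unit⁻¹ * ↑hu.unit := by rw [hu.unit_spec]
      _ = 1 := hu.unit.inv_mul
  have hed : e = d := by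
    calc e = e * (c * d) := by rw [hd, mul_one]
      _ = (e * c) * d := by rw [← mul_assoc]
      _ = d := by rw [hce, one_mul]
  have hcu : IsUnit c := ⟨⟨c, e, by rw [hed, hd], hce⟩, rfl⟩
  have ha : a = (a * c) * ↑hcu.unit⁻¹ := by
    conv_lhs => rw [← mul_one a, ← hcu.unit.mul_inv, hcu.unit_spec, ← mul_assoc]
  rw [ha]
  exact hu.mul (hcu.unit⁻¹.isUnit)

end Aux

/-- **Rieffel's proposition.** In a unital Banach algebra `A` (over `ℝ` or `ℂ`),
density of the invertible elements, density of the left-invertible elements and density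
of the right-invertible elements are all equivalent; moreover, if they hold, every
left-invertible (resp. right-invertible) element is invertible. -/
theorem rieffel_density_of_invertibles
    {𝕜 : Type*} [RCLike 𝕜] {A : Type*} [NormedRing A] [NormedAlgebra 𝕜 A]
    [CompleteSpace A] :
    (Dense {a : A | IsUnit a} ↔ Dense {a : A | ∃ x : A, x * a = 1}) ∧
    (Dense {a : A | IsUnit a} ↔ Dense {a : A | ∃ x : A, a * x = 1}) ∧
    (Dense {a : A | IsUnit a} →
      (∀ a : A, (∃ x : A, x * a = 1) → IsUnit a) ∧
      (∀ a : A, (∃ x : A, a * x = 1) → IsUnit a)) := by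
  have hsubL : {a : A | IsUnit a} ⊆ {a : A | ∃ x : A, x * a = 1} := by
    rintro a ⟨u, rfl⟩; exact ⟨↑u⁻¹, u.inv_mul⟩
  have hsubR : {a : A | IsUnit a} ⊆ {a : A | ∃ x : A, a * x = 1} := by
    rintro a ⟨u, rfl⟩; exact ⟨↑u⁻¹, u.mul_inv⟩
  refine ⟨⟨fun h => h.mono hsubL, fun h => h.mono fun a ha => aux_left h a ha⟩,
    ⟨fun h => h.mono hsubR, fun h => h.mono fun a ha => aux_right h a ha⟩,
    fun h => ⟨aux_left (h.mono hsubL), aux_right (h.mono hsubR)⟩⟩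
end

section
/- Let E be a Banach space and let T : E → E be a bounded linear operator such that the kernel of T is finite-dimensional, the quotient space E / T[E] is finite-dimensional, and dim ker T = dim (E / T[E]) (i.e., T is a Fredholm operator of index 0). Then T lies in the closure of the set of invertible bounded linear operators on E, i.e., for every ε > 0 there is a bounded linear operator S on E with a bounded linear inverse such that ‖T − S‖ < ε. -/
/-!
Pick a continuous projection `P` onto the finite-dimensional kernel of `T`, an algebraic
complement `N` of its range, and a linear isomorphism `J : ker T ≃ N`, which exists because the
index is zero. Then `T + c • J P` is bijective for every `c ≠ 0`: it agrees with `T` modulo `N`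
and with `c • J` on `ker T`. By the open mapping theorem these operators are invertible, and they
tend to `T` as `c → 0`.
-/

open Function LinearMap Filter Topology

namespace LinearMap

variable {R E F : Type*} [Ring R] [AddCommGroup E] [Module R E] [AddCommGroup F] [Module R F]

theorem injective_add_comp_of_disjoint (T : E →ₗ[R] F) {P : E →ₗ[R] ker T}
    (hP : ∀ x : ker T, P x = x) {N : Submodule R F} (J : ker T ≃ₗ[R] N)
    (hN : Disjoint (range T) N) : Injective (T + N.subtype ∘ₗ J.toLinearMap ∘ₗ P) := by
  refine (injective_iff_map_eq_zero _).2 fun x hx => ?_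
  have hTx : T x = -(J (P x) : F) := eq_neg_of_add_eq_zero_left hx
  have hTx0 : T x = 0 :=
    Submodule.disjoint_def.1 hN _ (mem_range_self T x) (hTx ▸ N.neg_mem (J (P x)).2)
  have hPx : P x = 0 := by simpa [hTx0] using hTx
  simpa [hPx] using (congrArg Subtype.val (hP ⟨x, hTx0⟩)).symm

theorem surjective_add_comp_of_codisjoint (T : E →ₗ[R] F) {P : E →ₗ[R] ker T}
    (hP : ∀ x : ker T, P x = x) {N : Submodule R F} (J : ker T ≃ₗ[R] N)
    (hN : Codisjoint (range T) N) : Surjective (T + N.subtype ∘ₗ J.toLinearMap ∘ₗ P) := by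
  intro y
  obtain ⟨_, n, ⟨x, rfl⟩, hn, rfl⟩ := Submodule.codisjoint_iff_exists_add_eq.1 hN y
  set k := J.symm ⟨n, hn⟩
  refine ⟨x - P x + k, ?_⟩
  have hPk : P (x - P x + k) = k := by simp [hP]
  simp [hPk, k]

theorem bijective_add_comp_of_isCompl (T : E →ₗ[R] F) {P : E →ₗ[R] ker T}
    (hP : ∀ x : ker T, P x = x) {N : Submodule R F} (J : ker T ≃ₗ[R] N)
    (hN : IsCompl (range T) N) : Bijective (T + N.subtype ∘ₗ J.toLinearMap ∘ₗ P) :=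
  ⟨injective_add_comp_of_disjoint T hP J hN.disjoint,
    surjective_add_comp_of_codisjoint T hP J hN.codisjoint⟩

end LinearMap

namespace ContinuousLinearMap

variable {𝕜 E F : Type*} [RCLike 𝕜] [NormedAddCommGroup E] [NormedSpace 𝕜 E]
  [NormedAddCommGroup F] [NormedSpace 𝕜 F]

theorem exists_bijective_add_smul_of_finrank_ker_eq (T : E →L[𝕜] F)
    [FiniteDimensional 𝕜 (ker (T : E →ₗ[𝕜] F))] [FiniteDimensional 𝕜 (F ⧸ range (T : E →ₗ[𝕜] F))]
    (hind : Module.finrank 𝕜 (ker (T : E →ₗ[𝕜] F)) =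
      Module.finrank 𝕜 (F ⧸ range (T : E →ₗ[𝕜] F))) :
    ∃ C : E →L[𝕜] F, ∀ c : 𝕜, c ≠ 0 → Bijective (T + c • C) := by
  obtain ⟨P, hP⟩ := Submodule.ClosedComplemented.of_finiteDimensional (ker (T : E →ₗ[𝕜] F))
  obtain ⟨N, hN⟩ := Submodule.exists_isCompl (range (T : E →ₗ[𝕜] F))
  let Q := Submodule.quotientEquivOfIsCompl _ _ hN
  have : FiniteDimensional 𝕜 N := Module.Finite.equiv Q
  let J := LinearEquiv.ofFinrankEq _ _ (hind.trans Q.finrank_eq)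
  refine ⟨N.subtypeL ∘L J.toLinearMap.toContinuousLinearMap ∘L P, fun c hc => ?_⟩
  -- the scalar `c` is absorbed into the isomorphism `J`
  convert bijective_add_comp_of_isCompl (T : E →ₗ[𝕜] F) (P := P) hP
    (J.trans (LinearEquiv.smulOfNeZero 𝕜 N c hc)) hN using 1
  ext x
  simp

theorem mem_closure_setOf_isUnit_of_finrank_ker_eq [CompleteSpace E] (T : E →L[𝕜] E)
    [FiniteDimensional 𝕜 (ker (T : E →ₗ[𝕜] E))] [FiniteDimensional 𝕜 (E ⧸ range (T : E →ₗ[𝕜] E))]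
    (hind : Module.finrank 𝕜 (ker (T : E →ₗ[𝕜] E)) =
      Module.finrank 𝕜 (E ⧸ range (T : E →ₗ[𝕜] E))) :
    T ∈ closure {S : E →L[𝕜] E | IsUnit S} := by
  obtain ⟨C, hC⟩ := exists_bijective_add_smul_of_finrank_ker_eq T hind
  have hlim : Tendsto (fun c : 𝕜 => T + c • C) (𝓝[≠] 0) (𝓝 T) := by
    have : Continuous fun c : 𝕜 => T + c • C := by fun_prop
    simpa using (this.tendsto 0).mono_left nhdsWithin_le_nhds
  exact mem_closure_of_tendsto hlim <| eventually_nhdsWithin_of_forall fun c hc =>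
    isUnit_iff_bijective.2 (hC c hc)

end ContinuousLinearMap

/-- Every Fredholm operator of index zero on a Banach space may be approximated
(in the operator norm) by invertible bounded operators. -/
theorem fredholm_index_zero_approx_invertible
    {𝕜 : Type*} [RCLike 𝕜] {E : Type*} [NormedAddCommGroup E] [NormedSpace 𝕜 E]
    [CompleteSpace E] (T : E →L[𝕜] E)
    (hker : FiniteDimensional 𝕜 (LinearMap.ker (T : E →ₗ[𝕜] E)))
    (hcoker : FiniteDimensional 𝕜 (E ⧸ LinearMap.range (T : E →ₗ[𝕜] E)))
    (hind : Module.finrank 𝕜 (LinearMap.ker (T : E →ₗ[𝕜] E)) = Module.finrank 𝕜 (E ⧸ LinearMap.range (T : E →ₗ[𝕜] E))) :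
    ∀ ε > 0, ∃ S : E →L[𝕜] E,
      (∃ S' : E →L[𝕜] E, S * S' = 1 ∧ S' * S = 1) ∧ ‖T - S‖ < ε := by
  intro ε hε
  obtain ⟨S, hS, hTS⟩ := Metric.mem_closure_iff.1
    (ContinuousLinearMap.mem_closure_setOf_isUnit_of_finrank_ker_eq T hind) ε hε
  exact ⟨S, isUnit_iff_exists.1 hS, by rwa [dist_eq_norm] at hTS⟩
end

section
/- Let A be a Banach algebra and let J ⊆ A be a closed two-sided ideal, and let A/J be the quotient Banach algebra with the quotient norm. If multiplication in A is open, then multiplication in A/J is open; if multiplication in A is uniformly open (with modulus δ(ε)), then multiplication in A/J is uniformly open (with the same modulus δ(ε)); and if multiplication in A is weakly open, then multiplication in A/J is weakly open. -/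
/-! A quotient map `π` carries balls onto balls and, being multiplicative, products of sets onto
products. Hence it pushes every inclusion `B(ab, δ) ⊆ B(a, ε) B(b, ε)` down to `A/J` with the same
`δ`, and, being an open map, it sends interior points of `B(a, ε) B(b, ε)` to interior points of
`B(πa, ε) B(πb, ε)`. Surjectivity makes every pair in `A/J` of the form `(πa, πb)`. -/

open Pointwise Metric

section BallImage

variable {F M N : Type*} [PseudoMetricSpace M] [PseudoMetricSpace N]

theorem isOpenMap_of_ball_subset_image_ball {f : M → N}
    (hf : ∀ x r, ball (f x) r ⊆ f '' ball x r) : IsOpenMap f :=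
  isOpenMap_iff_nhds_le.2 fun x => (nhds_basis_ball.map f).ge_iff.2 fun r hr =>
    Filter.mem_of_superset (ball_mem_nhds (f x) hr) (hf x r)

variable [Mul M] [Mul N] [FunLike F M N] [MulHomClass F M N] {f : F}

theorem image_ball_mul_ball (hf : ∀ x r, f '' ball x r = ball (f x) r) (a b : M) (ε : ℝ) :
    f '' (ball a ε * ball b ε) = ball (f a) ε * ball (f b) ε := by
  rw [Set.image_mul, hf, hf]

theorem ball_mul_subset_ball_mul_ball_map (hf : ∀ x r, f '' ball x r = ball (f x) r)
    {a b : M} {δ ε : ℝ} (h : ball (a * b) δ ⊆ ball a ε * ball b ε) :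
    ball (f a * f b) δ ⊆ ball (f a) ε * ball (f b) ε := by
  rw [← map_mul, ← hf, ← image_ball_mul_ball hf]
  exact Set.image_mono h

theorem interior_ball_mul_ball_nonempty_map (hf : ∀ x r, f '' ball x r = ball (f x) r)
    {a b : M} {ε : ℝ} (h : (interior (ball a ε * ball b ε)).Nonempty) :
    (interior (ball (f a) ε * ball (f b) ε)).Nonempty := by
  rw [← image_ball_mul_ball hf]
  exact (h.image f).mono <|
    (isOpenMap_of_ball_subset_image_ball fun x r => (hf x r).ge).image_interior_subset _

end BallImage

theorem quotient_preserves_open_multiplication_general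
    {A B : Type*}
    [NormedRing A]
    [NormedRing B]
    (π : A →+* B) (hsurj : Function.Surjective π)
    (hquot : ∀ (x : A) (r : ℝ), π '' Metric.ball x r = Metric.ball (π x) r) :
    -- (1) openness passes to the quotient:
    ((∀ x y : A, ∀ ε > 0, ∃ δ > 0,
        Metric.ball (x * y) δ ⊆ Metric.ball x ε * Metric.ball y ε) →
      ∀ x y : B, ∀ ε > 0, ∃ δ > 0,
        Metric.ball (x * y) δ ⊆ Metric.ball x ε * Metric.ball y ε) ∧
    -- (2) uniform openness passes to the quotient, with the same modulus δ(ε):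
    (∀ ε > 0, ∀ δ > 0,
      (∀ x y : A, Metric.ball (x * y) δ ⊆ Metric.ball x ε * Metric.ball y ε) →
      ∀ x y : B, Metric.ball (x * y) δ ⊆ Metric.ball x ε * Metric.ball y ε) ∧
    -- (3) weak openness passes to the quotient:
    ((∀ x y : A, ∀ ε > 0, (interior (Metric.ball x ε * Metric.ball y ε)).Nonempty) →
      ∀ x y : B, ∀ ε > 0, (interior (Metric.ball x ε * Metric.ball y ε)).Nonempty) := by
  refine ⟨fun h => hsurj.forall₂.2 fun a b ε hε => ?_,
    fun ε _ δ _ h => hsurj.forall₂.2 fun a b => ball_mul_subset_ball_mul_ball_map hquot (h a b),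
    fun h => hsurj.forall₂.2 fun a b ε hε =>
      interior_ball_mul_ball_nonempty_map hquot (h a b ε hε)⟩
  obtain ⟨δ, hδ, hsub⟩ := h a b ε hε
  exact ⟨δ, hδ, ball_mul_subset_ball_mul_ball_map hquot hsub⟩

/-- Openness, uniform openness (with the same modulus `δ(ε)`), and weak openness of
multiplication all pass from a Banach algebra `A` to a quotient `A/J` by a closed
two-sided ideal.  The quotient Banach algebra `A/J` is modelled as a Banach algebra `B`
together with a surjective ring homomorphism `π : A →+* B` satisfying the quotient-norm
identity `π '' B(x, r) = B(π x, r)` (which holds precisely for quotient maps by closed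
two-sided ideals, with `J = ker π`). -/
theorem quotient_preserves_open_multiplication
    {𝕜 : Type*} [RCLike 𝕜] {A B : Type*}
    [NormedRing A] [NormedAlgebra 𝕜 A] [CompleteSpace A]
    [NormedRing B] [NormedAlgebra 𝕜 B] [CompleteSpace B]
    (π : A →+* B) (hsurj : Function.Surjective π)
    (hquot : ∀ (x : A) (r : ℝ), π '' Metric.ball x r = Metric.ball (π x) r) :
    -- (1) openness passes to the quotient:
    ((∀ x y : A, ∀ ε > 0, ∃ δ > 0,
        Metric.ball (x * y) δ ⊆ Metric.ball x ε * Metric.ball y ε) →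
      ∀ x y : B, ∀ ε > 0, ∃ δ > 0,
        Metric.ball (x * y) δ ⊆ Metric.ball x ε * Metric.ball y ε) ∧
    -- (2) uniform openness passes to the quotient, with the same modulus δ(ε):
    (∀ ε > 0, ∀ δ > 0,
      (∀ x y : A, Metric.ball (x * y) δ ⊆ Metric.ball x ε * Metric.ball y ε) →
      ∀ x y : B, Metric.ball (x * y) δ ⊆ Metric.ball x ε * Metric.ball y ε) ∧
    -- (3) weak openness passes to the quotient:
    ((∀ x y : A, ∀ ε > 0, (interior (Metric.ball x ε * Metric.ball y ε)).Nonempty) →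
      ∀ x y : B, ∀ ε > 0, (interior (Metric.ball x ε * Metric.ball y ε)).Nonempty) :=
  quotient_preserves_open_multiplication_general π hsurj hquot
end

section
/- Let A be a Banach algebra containing a dense subalgebra A₀ such that multiplication restricted to A₀ is uniformly open (that is, for every ε > 0 there is δ > 0 such that for all x, y ∈ A₀ one has B(xy, δ) ∩ A₀ ⊆ (B(x, ε) ∩ A₀)·(B(y, ε) ∩ A₀)). Then multiplication in A is uniformly open. -/
open Pointwise

/-- If a Banach algebra `A` contains a dense subalgebra `A₀` on which multiplication is
uniformly open (relative to `A₀`), then multiplication in `A` is uniformly open. -/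
theorem uniformly_open_of_dense_subalgebra
    {𝕜 : Type*} [RCLike 𝕜] {A : Type*} [NormedRing A] [NormedAlgebra 𝕜 A]
    [CompleteSpace A]
    (A₀ : NonUnitalSubalgebra 𝕜 A) (hdense : Dense (A₀ : Set A))
    (h : ∀ ε > 0, ∃ δ > 0, ∀ x ∈ A₀, ∀ y ∈ A₀,
        Metric.ball (x * y) δ ∩ (A₀ : Set A) ⊆
          (Metric.ball x ε ∩ (A₀ : Set A)) * (Metric.ball y ε ∩ (A₀ : Set A))) :
    ∀ ε > 0, ∃ δ > 0, ∀ x y : A,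
        Metric.ball (x * y) δ ⊆ Metric.ball x ε * Metric.ball y ε := by
  intro ε hε
  have hkey : ∀ n : ℕ, ε / 2 ^ (n + 3) = ε / 8 * (1 / 2) ^ n := by
    intro n
    rw [div_pow, one_pow, pow_add]
    ring
  have hseq : ∀ n : ℕ, ∃ δ > 0, δ ≤ ε / 2 ^ (n + 3) ∧ ∀ x ∈ A₀, ∀ y ∈ A₀,
      Metric.ball (x * y) δ ∩ (A₀ : Set A) ⊆
        (Metric.ball x (ε / 2 ^ (n + 3)) ∩ (A₀ : Set A)) *
          (Metric.ball y (ε / 2 ^ (n + 3)) ∩ (A₀ : Set A)) := by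
    intro n
    obtain ⟨D, hD, hprop⟩ := h (ε / 2 ^ (n + 3)) (by positivity)
    refine ⟨min D (ε / 2 ^ (n + 3)), lt_min hD (by positivity), min_le_right _ _, ?_⟩
    intro x hx y hy z hz
    exact hprop x hx y hy ⟨Metric.ball_subset_ball (min_le_left _ _) hz.1, hz.2⟩
  choose δ hδpos hδle hδprop using hseq
  refine ⟨δ 0 / 4, by linarith [hδpos 0], fun x y z hz => ?_⟩
  rw [Metric.mem_ball] at hz
  -- find good starting approximations x₀, y₀ ∈ A₀
  obtain ⟨r, hr, hcont⟩ : ∃ r > 0, ∀ a b : A, dist a x < r → dist b y < r →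
      dist (a * b) (x * y) < δ 0 / 4 := by
    have hc : ContinuousAt (fun p : A × A => p.1 * p.2) (x, y) :=
      continuous_mul.continuousAt
    rw [Metric.continuousAt_iff] at hc
    obtain ⟨r, hrpos, hcc⟩ := hc (δ 0 / 4) (by linarith [hδpos 0])
    exact ⟨r, hrpos, fun a b ha hb =>
      hcc (show dist ((a, b) : A × A) (x, y) < r by
        rw [Prod.dist_eq]; exact max_lt ha hb)⟩
  obtain ⟨x₀, hx₀b, hx₀mem⟩ :=
    Metric.dense_iff.mp hdense x (min r (ε / 4)) (by positivity)
  obtain ⟨y₀, hy₀b, hy₀mem⟩ :=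
    Metric.dense_iff.mp hdense y (min r (ε / 4)) (by positivity)
  rw [Metric.mem_ball] at hx₀b hy₀b
  have hx₀x : dist x₀ x < ε / 4 := lt_of_lt_of_le hx₀b (min_le_right _ _)
  have hy₀y : dist y₀ y < ε / 4 := lt_of_lt_of_le hy₀b (min_le_right _ _)
  have hbase : dist z (x₀ * y₀) < δ 0 / 2 := by
    have h1 : dist (x₀ * y₀) (x * y) < δ 0 / 4 :=
      hcont x₀ y₀ (lt_of_lt_of_le hx₀b (min_le_left _ _))
        (lt_of_lt_of_le hy₀b (min_le_left _ _))
    calc dist z (x₀ * y₀) ≤ dist z (x * y) + dist (x * y) (x₀ * y₀) :=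
          dist_triangle _ _ _
      _ < δ 0 / 4 + δ 0 / 4 := add_lt_add hz (by rwa [dist_comm])
      _ = δ 0 / 2 := by ring
  -- the invariant
  set Q : ℕ → A × A → Prop := fun n p =>
    p.1 ∈ A₀ ∧ p.2 ∈ A₀ ∧ dist z (p.1 * p.2) < δ n / 2 with hQdef
  have step : ∀ n (p : A × A), ∃ q : A × A, Q n p →
      Q (n + 1) q ∧ dist q.1 p.1 < ε / 2 ^ (n + 3) ∧
        dist q.2 p.2 < ε / 2 ^ (n + 3) := by
    intro n p
    by_cases hQ : Q n p
    · obtain ⟨ha, hb, hd⟩ := hQ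
      obtain ⟨z', hz'b, hz'mem⟩ := Metric.dense_iff.mp hdense z
        (min (δ (n + 1) / 2) (δ n / 2)) (lt_min (by linarith [hδpos (n+1)]) (by linarith [hδpos n]))
      rw [Metric.mem_ball] at hz'b
      have hz'1 : dist z' z < δ (n + 1) / 2 := lt_of_lt_of_le hz'b (min_le_left _ _)
      have hz'2 : dist z' z < δ n / 2 := lt_of_lt_of_le hz'b (min_le_right _ _)
      have hz'ball : z' ∈ Metric.ball (p.1 * p.2) (δ n) := by
        rw [Metric.mem_ball]
        calc dist z' (p.1 * p.2) ≤ dist z' z + dist z (p.1 * p.2) :=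
              dist_triangle _ _ _
          _ < δ n / 2 + δ n / 2 := add_lt_add hz'2 hd
          _ = δ n := by ring
      have hmem := hδprop n p.1 ha p.2 hb ⟨hz'ball, hz'mem⟩
      rw [Set.mem_mul] at hmem
      obtain ⟨a, ⟨haball, haA⟩, b, ⟨hbball, hbA⟩, hab⟩ := hmem
      rw [Metric.mem_ball] at haball hbball
      refine ⟨(a, b), fun _ => ⟨⟨haA, hbA, ?_⟩, haball, hbball⟩⟩
      show dist z (a * b) < δ (n + 1) / 2
      rw [hab, dist_comm]
      exact hz'1
    · exact ⟨p, fun hQ' => absurd hQ' hQ⟩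
  choose F hF using step
  set g : ℕ → A × A := fun n => Nat.rec (x₀, y₀) F n with hg
  have hQg : ∀ n, Q n (g n) := by
    intro n
    induction n with
    | zero => exact ⟨hx₀mem, hy₀mem, hbase⟩
    | succ n ih => exact (hF n (g n) ih).1
  have hd1 : ∀ n, dist ((g n).1) ((g (n + 1)).1) ≤ ε / 8 * (1 / 2) ^ n := by
    intro n
    rw [dist_comm, ← hkey n]
    exact ((hF n (g n) (hQg n)).2.1).le
  have hd2 : ∀ n, dist ((g n).2) ((g (n + 1)).2) ≤ ε / 8 * (1 / 2) ^ n := by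
    intro n
    rw [dist_comm, ← hkey n]
    exact ((hF n (g n) (hQg n)).2.2).le
  have hc1 : CauchySeq (fun n => (g n).1) :=
    cauchySeq_of_le_geometric (1 / 2) (ε / 8) (by norm_num) hd1
  have hc2 : CauchySeq (fun n => (g n).2) :=
    cauchySeq_of_le_geometric (1 / 2) (ε / 8) (by norm_num) hd2
  obtain ⟨a, hta⟩ := cauchySeq_tendsto_of_complete hc1
  obtain ⟨b, htb⟩ := cauchySeq_tendsto_of_complete hc2
  have hda : dist x₀ a ≤ ε / 4 := by
    have h1 := dist_le_of_le_geometric_of_tendsto₀ (1 / 2) (ε / 8) (by norm_num) hd1 hta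
    have heq : ε / 8 / (1 - 1 / 2 : ℝ) = ε / 4 := by ring
    exact heq ▸ h1
  have hdb : dist y₀ b ≤ ε / 4 := by
    have h1 := dist_le_of_le_geometric_of_tendsto₀ (1 / 2) (ε / 8) (by norm_num) hd2 htb
    have heq : ε / 8 / (1 - 1 / 2 : ℝ) = ε / 4 := by ring
    exact heq ▸ h1
  -- the products converge to z
  have htends0 : Filter.Tendsto (fun n : ℕ => ε / 8 * (1 / 2 : ℝ) ^ n)
      Filter.atTop (nhds 0) := by
    simpa using (tendsto_pow_atTop_nhds_zero_of_lt_one (by norm_num : (0:ℝ) ≤ 1/2)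
      (by norm_num : (1/2 : ℝ) < 1)).const_mul (ε / 8)
  have htz : Filter.Tendsto (fun n => (g n).1 * (g n).2) Filter.atTop (nhds z) := by
    rw [tendsto_iff_dist_tendsto_zero]
    refine squeeze_zero (fun n => dist_nonneg) (fun n => ?_) htends0
    have := (hQg n).2.2
    rw [dist_comm] at this
    calc dist ((g n).1 * (g n).2) z ≤ δ n / 2 := this.le
      _ ≤ ε / 2 ^ (n + 3) := by linarith [hδle n, hδpos n]
      _ = ε / 8 * (1 / 2) ^ n := hkey n
  have htab : Filter.Tendsto (fun n => (g n).1 * (g n).2) Filter.atTop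
      (nhds (a * b)) := hta.mul htb
  have hzab : z = a * b := tendsto_nhds_unique htz htab
  have hax : a ∈ Metric.ball x ε := by
    rw [Metric.mem_ball]
    calc dist a x ≤ dist a x₀ + dist x₀ x := dist_triangle _ _ _
      _ < ε / 4 + ε / 4 := by
          rw [dist_comm]
          exact add_lt_add_of_le_of_lt hda hx₀x
      _ < ε := by linarith
  have hby : b ∈ Metric.ball y ε := by
    rw [Metric.mem_ball]
    calc dist b y ≤ dist b y₀ + dist y₀ y := dist_triangle _ _ _
      _ < ε / 4 + ε / 4 := by
          rw [dist_comm]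
          exact add_lt_add_of_le_of_lt hdb hy₀y
      _ < ε := by linarith
  rw [hzab]
  exact Set.mul_mem_mul hax hby
end

section
/- Let A be a unital Banach algebra. If multiplication in A, regarded as the map A × A → A, (x, y) ↦ xy, is an open mapping, then the set of invertible elements of A is dense in A (i.e., A has topological stable rank 1). -/
/-!
Open multiplication at `(x, 0)` and at `(0, y)` writes a small nonzero scalar, hence a unit, as a
product whose left factor is arbitrarily close to `x` (resp. right factor close to `y`); so
right-invertible and left-invertible elements are both dense. Right-invertible elements form an
open set, since `u * w = 1` makes `u' * w` a unit for `u'` near `u`. An open dense set meets a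
dense set in a dense set, and an element with both a left and a right inverse is a unit.
-/

open Pointwise Metric Filter Topology

theorem zero_mem_closure_setOf_isUnit {𝕜 A : Type*} [NontriviallyNormedField 𝕜]
    [SeminormedRing A] [NormedAlgebra 𝕜 A] : (0 : A) ∈ closure {z : A | IsUnit z} := by
  have htendsto : Tendsto (algebraMap 𝕜 A) (𝓝[≠] 0) (𝓝 0) :=
    ((continuous_algebraMap 𝕜 A).tendsto' 0 0 (map_zero _)).mono_left nhdsWithin_le_nhds
  exact mem_closure_of_tendsto htendsto <|
    eventually_mem_nhdsWithin.mono fun c hc => (isUnit_iff_ne_zero.mpr hc).map _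

section OpenMultiplication

variable {M : Type*} [MonoidWithZero M] [PseudoMetricSpace M]

theorem dense_exists_right_inv
    (hmul : ∀ x y : M, ∀ ε > 0, ∃ δ > 0, ball (x * y) δ ⊆ ball x ε * ball y ε)
    (h0 : (0 : M) ∈ closure {z : M | IsUnit z}) : Dense {u : M | ∃ w, u * w = 1} := by
  refine Metric.dense_iff.mpr fun x ε hε => ?_
  obtain ⟨δ, hδ, hball⟩ := hmul x 0 ε hε
  obtain ⟨z, hz, hzδ⟩ := Metric.mem_closure_iff.mp h0 δ hδ
  obtain ⟨u, hu, v, -, rfl⟩ := hball (by rwa [mem_ball', mul_zero])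
  obtain ⟨t, ht⟩ := IsUnit.exists_right_inv hz
  exact ⟨u, hu, v * t, by simpa only [mul_assoc] using ht⟩

theorem dense_exists_left_inv
    (hmul : ∀ x y : M, ∀ ε > 0, ∃ δ > 0, ball (x * y) δ ⊆ ball x ε * ball y ε)
    (h0 : (0 : M) ∈ closure {z : M | IsUnit z}) : Dense {u : M | ∃ l, l * u = 1} := by
  refine Metric.dense_iff.mpr fun y ε hε => ?_
  obtain ⟨δ, hδ, hball⟩ := hmul 0 y ε hε
  obtain ⟨z, hz, hzδ⟩ := Metric.mem_closure_iff.mp h0 δ hδ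
  obtain ⟨v, -, u, hu, rfl⟩ := hball (by rwa [mem_ball', zero_mul])
  obtain ⟨t, ht⟩ := IsUnit.exists_left_inv hz
  exact ⟨u, hu, t * v, by simpa only [mul_assoc] using ht⟩

end OpenMultiplication

theorem isOpen_exists_right_inv {R : Type*} [NormedRing R] [HasSummableGeomSeries R] :
    IsOpen {u : R | ∃ w, u * w = 1} := by
  refine isOpen_iff_mem_nhds.mpr fun u ⟨w, huw⟩ => ?_
  have hnhds : {u' : R | IsUnit (u' * w)} ∈ 𝓝 u :=
    (Units.isOpen.preimage (continuous_mul_const w)).mem_nhds (by simp [huw])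
  refine mem_of_superset hnhds fun u' hu' => ?_
  obtain ⟨t, ht⟩ := IsUnit.exists_right_inv hu'
  exact ⟨w * t, by rw [← mul_assoc, ht]⟩

/-- If multiplication in a unital Banach algebra `A` is an open mapping, then the
invertible elements are dense in `A`, i.e. `A` has topological stable rank 1. -/
theorem tsr_one_of_open_multiplication
    {𝕜 : Type*} [RCLike 𝕜] {A : Type*} [NormedRing A] [NormedAlgebra 𝕜 A]
    [CompleteSpace A]
    (h : ∀ x y : A, ∀ ε > 0, ∃ δ > 0,
        Metric.ball (x * y) δ ⊆ Metric.ball x ε * Metric.ball y ε) :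
    Dense {a : A | IsUnit a} := by
  have h0 : (0 : A) ∈ closure {z : A | IsUnit z} := zero_mem_closure_setOf_isUnit (𝕜 := 𝕜)
  have hunits : {a : A | IsUnit a} = {u | ∃ w, u * w = 1} ∩ {u | ∃ l, l * u = 1} :=
    Set.ext fun _ => isUnit_iff_exists_and_exists
  rw [hunits]
  exact (dense_exists_right_inv h h0).inter_of_isOpen_left (dense_exists_left_inv h h0)
    isOpen_exists_right_inv
end

section
/- Let A be a unital Banach algebra, let x ∈ A be invertible and let y ∈ A. Then for every ε > 0, setting δ = ε / (2‖x⁻¹‖), one has B(xy, δ) ⊆ B(x, ε)·B(y, ε). Likewise, if y is invertible and x ∈ A is arbitrary, then for every ε > 0, setting δ = ε / (2‖y⁻¹‖), one has B(xy, δ) ⊆ B(x, ε)·B(y, ε). In particular, multiplication in A is open at every point of (A × GL A) ∪ (GL A × A), where GL A denotes the set of invertible elements of A. -/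
open Pointwise

lemma left_aux {A : Type*} [NormedRing A] (u : Aˣ) (y : A) (ε : ℝ) (hε : 0 < ε) :
    Metric.ball ((u : A) * y) (ε / (2 * ‖((u⁻¹ : Aˣ) : A)‖)) ⊆
      Metric.ball (u : A) ε * Metric.ball y ε := by
  intro z hz
  rcases eq_or_lt_of_le (norm_nonneg ((u⁻¹ : Aˣ) : A)) with h0 | hpos
  · rw [← h0] at hz
    simp at hz
  · refine ⟨(u : A), Metric.mem_ball_self hε, ((u⁻¹ : Aˣ) : A) * z, ?_, ?_⟩
    · rw [Metric.mem_ball, dist_eq_norm] at hz ⊢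
      have : ((u⁻¹ : Aˣ) : A) * z - y = ((u⁻¹ : Aˣ) : A) * (z - (u : A) * y) := by
        rw [mul_sub, ← mul_assoc]
        simp
      rw [this]
      calc ‖((u⁻¹ : Aˣ) : A) * (z - (u : A) * y)‖
          ≤ ‖((u⁻¹ : Aˣ) : A)‖ * ‖z - (u : A) * y‖ := norm_mul_le _ _
        _ < ‖((u⁻¹ : Aˣ) : A)‖ * (ε / (2 * ‖((u⁻¹ : Aˣ) : A)‖)) :=
            mul_lt_mul_of_pos_left hz hpos
        _ = ε / 2 := by
              rw [mul_div_assoc', mul_comm 2 ‖((u⁻¹ : Aˣ) : A)‖,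
                mul_div_mul_left _ _ hpos.ne']
        _ < ε := by linarith
    · show (u : A) * (((u⁻¹ : Aˣ) : A) * z) = z
      rw [← mul_assoc]; simp

lemma right_aux {A : Type*} [NormedRing A] (x : A) (v : Aˣ) (ε : ℝ) (hε : 0 < ε) :
    Metric.ball (x * (v : A)) (ε / (2 * ‖((v⁻¹ : Aˣ) : A)‖)) ⊆
      Metric.ball x ε * Metric.ball (v : A) ε := by
  intro z hz
  rcases eq_or_lt_of_le (norm_nonneg ((v⁻¹ : Aˣ) : A)) with h0 | hpos
  · rw [← h0] at hz
    simp at hz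
  · refine ⟨z * ((v⁻¹ : Aˣ) : A), ?_, (v : A), Metric.mem_ball_self hε, ?_⟩
    · rw [Metric.mem_ball, dist_eq_norm] at hz ⊢
      have : z * ((v⁻¹ : Aˣ) : A) - x = (z - x * (v : A)) * ((v⁻¹ : Aˣ) : A) := by
        rw [sub_mul, mul_assoc]
        simp
      rw [this]
      calc ‖(z - x * (v : A)) * ((v⁻¹ : Aˣ) : A)‖
          ≤ ‖z - x * (v : A)‖ * ‖((v⁻¹ : Aˣ) : A)‖ := norm_mul_le _ _
        _ < (ε / (2 * ‖((v⁻¹ : Aˣ) : A)‖)) * ‖((v⁻¹ : Aˣ) : A)‖ :=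
            mul_lt_mul_of_pos_right hz hpos
        _ = ε / 2 := by
              rw [div_mul_eq_mul_div, mul_div_mul_right _ _ hpos.ne']
        _ < ε := by linarith
    · show (z * ((v⁻¹ : Aˣ) : A)) * (v : A) = z
      rw [mul_assoc]; simp

/-- In a unital Banach algebra, multiplication is open at any pair whose first (or second)
coordinate is invertible; quantitatively, if `x` is invertible then
`B(xy, ε / (2‖x⁻¹‖)) ⊆ B(x, ε) · B(y, ε)`, and symmetrically for invertible `y`. -/
theorem mul_open_at_invertible
    {𝕜 : Type*} [RCLike 𝕜] {A : Type*} [NormedRing A] [NormedAlgebra 𝕜 A]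
    [CompleteSpace A] :
    (∀ (u : Aˣ) (y : A), ∀ ε > 0,
        Metric.ball ((u : A) * y) (ε / (2 * ‖((u⁻¹ : Aˣ) : A)‖)) ⊆
          Metric.ball (u : A) ε * Metric.ball y ε) ∧
    (∀ (x : A) (v : Aˣ), ∀ ε > 0,
        Metric.ball (x * (v : A)) (ε / (2 * ‖((v⁻¹ : Aˣ) : A)‖)) ⊆
          Metric.ball x ε * Metric.ball (v : A) ε) ∧
    (∀ x y : A, (IsUnit x ∨ IsUnit y) → ∀ ε > 0, ∃ δ > 0,
        Metric.ball (x * y) δ ⊆ Metric.ball x ε * Metric.ball y ε) := by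
  refine ⟨fun u y ε hε => left_aux u y ε hε, fun x v ε hε => right_aux x v ε hε, ?_⟩
  rintro x y (⟨u, rfl⟩ | ⟨v, rfl⟩) ε hε
  · rcases eq_or_lt_of_le (norm_nonneg ((u⁻¹ : Aˣ) : A)) with h0 | hpos
    · have hz0 : ((u⁻¹ : Aˣ) : A) = 0 := norm_eq_zero.mp h0.symm
      have h1 : (1 : A) = 0 := by rw [← u.inv_mul, hz0, zero_mul]
      haveI : Subsingleton A := subsingleton_of_zero_eq_one h1.symm
      exact ⟨ε, hε, fun z _ => ⟨(u : A), Metric.mem_ball_self hε, y,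
        Metric.mem_ball_self hε, Subsingleton.elim _ _⟩⟩
    · exact ⟨ε / (2 * ‖((u⁻¹ : Aˣ) : A)‖), by positivity, left_aux u y ε hε⟩
  · rcases eq_or_lt_of_le (norm_nonneg ((v⁻¹ : Aˣ) : A)) with h0 | hpos
    · have hz0 : ((v⁻¹ : Aˣ) : A) = 0 := norm_eq_zero.mp h0.symm
      have h1 : (1 : A) = 0 := by rw [← v.inv_mul, hz0, zero_mul]
      haveI : Subsingleton A := subsingleton_of_zero_eq_one h1.symm
      exact ⟨ε, hε, fun z _ => ⟨x, Metric.mem_ball_self hε, (v : A),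
        Metric.mem_ball_self hε, Subsingleton.elim _ _⟩⟩
    · exact ⟨ε / (2 * ‖((v⁻¹ : Aˣ) : A)‖), by positivity, right_aux x v ε hε⟩
end

section
/- Let A be a unital Banach algebra in which the set of invertible elements is dense. Then multiplication in A is weakly open, i.e., for all x, y ∈ A and ε > 0 the set B(x, ε)·B(y, ε) has non-empty interior. -/
open Pointwise

/-- If the invertible elements of a unital Banach algebra `A` are dense, then
multiplication in `A` is weakly open: every product of two open balls has
non-empty interior. -/
theorem weakly_open_of_dense_invertibles
    {𝕜 : Type*} [RCLike 𝕜] {A : Type*} [NormedRing A] [NormedAlgebra 𝕜 A]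
    [CompleteSpace A] (h : Dense {a : A | IsUnit a}) :
    ∀ x y : A, ∀ ε > 0,
      (interior (Metric.ball x ε * Metric.ball y ε)).Nonempty := by
  intro x y ε hε
  obtain ⟨u, hu, hux⟩ := h.exists_mem_open Metric.isOpen_ball ⟨x, Metric.mem_ball_self hε⟩
  obtain ⟨v, rfl⟩ := hu
  set S : Set A := (fun z => (↑v⁻¹ : A) * z) ⁻¹' Metric.ball y ε with hS
  have hS_open : IsOpen S :=
    Metric.isOpen_ball.preimage (continuous_const.mul continuous_id)
  have hmem : (↑v : A) * y ∈ S := by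
    simp [hS, Set.mem_preimage, Units.inv_mul_cancel_left, Metric.mem_ball_self hε]
  have hsub : S ⊆ Metric.ball x ε * Metric.ball y ε := by
    intro z hz
    have : z = (↑v : A) * ((↑v⁻¹ : A) * z) := by
      rw [Units.mul_inv_cancel_left]
    rw [this]
    exact Set.mul_mem_mul hux hz
  exact ⟨_, hS_open.subset_interior_iff.mpr hsub hmem⟩
end

section
/- Let X be a zero-dimensional (equivalently, totally disconnected) compact Hausdorff space and let C(X) be the Banach algebra of all continuous scalar-valued (real or complex) functions on X with the supremum norm and pointwise multiplication. Then multiplication in C(X) is uniformly open; in fact, for every ε > 0 and all f, g ∈ C(X), one has B(fg, ε²/4) ⊆ B(f, ε)·B(g, ε). -/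
/-!
If `‖h - fg‖ < ε²/4`, factor `h = FG` pointwise by one of three rules: `F = f, G = h/f` where
`|f| > ε/4`, `F = h/g, G = g` where `|g| > ε/4`, and `F = s, G = h/s` for a constant `s` of size
`3ε/5` where both `|f|` and `|g|` are below `ε/3`. Each rule keeps `F` and `G` within `ε` of `f`
and `g`. In a zero-dimensional compact space a clopen set fits between `{|f| ≥ ε/3}` and
`{|f| > ε/4}` (and likewise for `g`), and gluing the three rules along clopen sets keeps `F` and
`G` continuous.
-/

open Pointwise Set

section NormEstimates

variable {𝕜 : Type*} [NormedField 𝕜]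

theorem norm_div_sub_lt_of_norm_sub_mul_lt {a b c : 𝕜} {r ε : ℝ} (hr : 0 < r) (ha : r ≤ ‖a‖)
    (hc : ‖c - a * b‖ < r * ε) : ‖c / a - b‖ < ε := by
  have ha₀ : a ≠ 0 := norm_pos_iff.mp (hr.trans_le ha)
  have hε : 0 < ε := pos_of_mul_pos_right ((norm_nonneg _).trans_lt hc) hr.le
  rw [div_sub' ha₀, norm_div, div_lt_iff₀ (norm_pos_iff.mpr ha₀), mul_comm ε]
  exact hc.trans_le (mul_le_mul_of_nonneg_right ha hε.le)

/-- Any `‖s‖` strictly between `13ε/24` and `2ε/3` would do. -/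
theorem norm_div_sub_lt_of_norm_lt_third {a b c s : 𝕜} {ε : ℝ} (ha : ‖a‖ < ε / 3)
    (hb : ‖b‖ < ε / 3) (hc : ‖c - a * b‖ < ε ^ 2 / 4) (hs : ‖s‖ = 3 * ε / 5) :
    ‖c / s - b‖ < ε := by
  have hε : 0 < ε := by linarith [norm_nonneg a]
  have hc' : ‖c‖ < 13 * ε ^ 2 / 36 := calc
    ‖c‖ ≤ ‖c - a * b‖ + ‖a‖ * ‖b‖ := by simpa using norm_add_le (c - a * b) (a * b)
    _ < 13 * ε ^ 2 / 36 := by nlinarith [norm_nonneg a, norm_nonneg b]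
  have hcs : ‖c / s‖ < 65 * ε / 108 := by
    rw [norm_div, hs, div_lt_iff₀ (by positivity)]
    nlinarith
  linarith [norm_sub_le (c / s) b]

end NormEstimates

section ClopenGluing

variable {X Y : Type*} [TopologicalSpace X] [TopologicalSpace Y]

def HasContinuousSelectionOn (P : X → Y → Prop) (U : Set X) : Prop :=
  ∃ F : X → Y, ContinuousOn F U ∧ ∀ x ∈ U, P x (F x)

theorem IsClopen.hasContinuousSelectionOn {P : X → Y → Prop} {U V : Set X} (hV : IsClopen V)
    (h₁ : HasContinuousSelectionOn P (U ∩ V)) (h₂ : HasContinuousSelectionOn P (U \ V)) :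
    HasContinuousSelectionOn P U := by
  classical
  obtain ⟨F₁, hF₁, hP₁⟩ := h₁
  obtain ⟨F₂, hF₂, hP₂⟩ := h₂
  refine ⟨V.piecewise F₁ F₂, ?_, fun x hx => ?_⟩
  · refine ContinuousOn.piecewise (by simp [hV.frontier_eq]) ?_ ?_
    · rwa [hV.isClosed.closure_eq]
    · rwa [hV.compl.isClosed.closure_eq]
  · by_cases hxV : x ∈ V
    · simpa [hxV] using hP₁ x ⟨hx, hxV⟩
    · simpa [hxV] using hP₂ x ⟨hx, hxV⟩

theorem exists_isClopen_forall_lt_of_lt [CompactSpace X] [T2Space X]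
    [TotallyDisconnectedSpace X] {φ : X → ℝ} (hφ : Continuous φ) {a b : ℝ} (hab : a < b) :
    ∃ V : Set X, IsClopen V ∧ (∀ x ∈ V, a < φ x) ∧ ∀ x ∉ V, φ x < b := by
  obtain ⟨V, hV, hbV, hVa⟩ := exists_clopen_of_closed_subset_open
    (isClosed_le continuous_const hφ) (isOpen_lt continuous_const hφ)
    (fun x (hx : b ≤ φ x) => show a < φ x by linarith)
  exact ⟨V, hV, hVa, fun x hx => not_le.mp fun hbx => hx (hbV hbx)⟩

end ClopenGluing

section Factorization

variable {𝕜 : Type*} [RCLike 𝕜] {X : Type*} [TopologicalSpace X]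

theorem hasContinuousSelectionOn_factorization {V₁ V₂ : Set X} (hV₁ : IsClopen V₁)
    (hV₂ : IsClopen V₂) {f g h : C(X, 𝕜)} {ε : ℝ} (hε : 0 < ε)
    (hh : ∀ x, ‖h x - f x * g x‖ < ε ^ 2 / 4)
    (hf₁ : ∀ x ∈ V₁, ε / 4 < ‖f x‖) (hf₂ : ∀ x ∉ V₁, ‖f x‖ < ε / 3)
    (hg₁ : ∀ x ∈ V₂, ε / 4 < ‖g x‖) (hg₂ : ∀ x ∉ V₂, ‖g x‖ < ε / 3) :
    HasContinuousSelectionOn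
      (fun x (p : 𝕜 × 𝕜) => p.1 * p.2 = h x ∧ dist p.1 (f x) < ε ∧ dist p.2 (g x) < ε) univ := by
  have hh' : ∀ x, ‖h x - f x * g x‖ < ε / 4 * ε := fun x => by linarith [hh x]
  have hf₀ : ∀ x ∈ V₁, f x ≠ 0 := fun x hx => norm_pos_iff.mp (by linarith [hf₁ x hx])
  have hg₀ : ∀ x ∈ V₂, g x ≠ 0 := fun x hx => norm_pos_iff.mp (by linarith [hg₁ x hx])
  set s : 𝕜 := ((3 * ε / 5 : ℝ) : 𝕜)
  have hs : ‖s‖ = 3 * ε / 5 := by simp [s, abs_of_pos hε]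
  refine hV₁.hasContinuousSelectionOn ⟨fun x => (f x, h x / f x), ?_, ?_⟩ <|
    hV₂.hasContinuousSelectionOn ⟨fun x => (h x / g x, g x), ?_, ?_⟩ ⟨fun x => (s, h x / s), ?_, ?_⟩
  · exact f.continuous.continuousOn.prodMk <| h.continuous.continuousOn.div
      f.continuous.continuousOn fun x hx => hf₀ x hx.2
  · rintro x ⟨-, hx⟩
    refine ⟨mul_div_cancel₀ _ (hf₀ x hx), by simpa using hε, ?_⟩
    rw [dist_eq_norm]
    exact norm_div_sub_lt_of_norm_sub_mul_lt (by positivity) (hf₁ x hx).le (hh' x)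
  · exact (h.continuous.continuousOn.div g.continuous.continuousOn fun x hx => hg₀ x hx.2).prodMk
      g.continuous.continuousOn
  · rintro x ⟨-, hx⟩
    refine ⟨div_mul_cancel₀ _ (hg₀ x hx), ?_, by simpa using hε⟩
    rw [dist_eq_norm]
    exact norm_div_sub_lt_of_norm_sub_mul_lt (r := ε / 4) (by positivity) (hg₁ x hx).le
      (by rw [mul_comm (g x)]; exact hh' x)
  · exact continuousOn_const.prodMk (h.continuous.div_const s).continuousOn
  · rintro x ⟨⟨-, hx₁⟩, hx₂⟩
    have hs₀ : s ≠ 0 := norm_ne_zero_iff.mp (by rw [hs]; positivity)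
    refine ⟨mul_div_cancel₀ _ hs₀, ?_, ?_⟩
    · rw [dist_eq_norm]
      linarith [norm_sub_le s (f x), hf₂ x hx₁]
    · rw [dist_eq_norm]
      exact norm_div_sub_lt_of_norm_lt_third (hf₂ x hx₁) (hg₂ x hx₂) (hh x) hs

end Factorization

/-- If `X` is a zero-dimensional (totally disconnected) compact Hausdorff space, then
multiplication in `C(X)` (real or complex scalars) is uniformly open; in fact
`B(fg, ε²/4) ⊆ B(f, ε) · B(g, ε)` for all `f, g ∈ C(X)` and `ε > 0`. -/
theorem CX_uniformly_open_multiplication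
    {𝕜 : Type*} [RCLike 𝕜] {X : Type*} [TopologicalSpace X] [CompactSpace X]
    [T2Space X] [TotallyDisconnectedSpace X] :
    ∀ (f g : C(X, 𝕜)), ∀ ε > 0,
      Metric.ball (f * g) (ε ^ 2 / 4) ⊆ Metric.ball f ε * Metric.ball g ε := by
  intro f g ε hε h hh
  have hclose : ∀ x, ‖h x - f x * g x‖ < ε ^ 2 / 4 := fun x => by
    simpa [dist_eq_norm] using (ContinuousMap.dist_apply_le_dist x).trans_lt hh
  have hlevels : ε / 4 < ε / 3 := by linarith
  obtain ⟨V₁, hV₁, hf₁, hf₂⟩ := exists_isClopen_forall_lt_of_lt f.continuous.norm hlevels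
  obtain ⟨V₂, hV₂, hg₁, hg₂⟩ := exists_isClopen_forall_lt_of_lt g.continuous.norm hlevels
  obtain ⟨F, hF, hFh⟩ :=
    hasContinuousSelectionOn_factorization hV₁ hV₂ hε hclose hf₁ hf₂ hg₁ hg₂
  rw [continuousOn_univ] at hF
  refine ⟨⟨Prod.fst ∘ F, hF.fst⟩, ?_, ⟨Prod.snd ∘ F, hF.snd⟩, ?_, ?_⟩
  · exact (ContinuousMap.dist_lt_iff hε).2 fun x => (hFh x (mem_univ x)).2.1
  · exact (ContinuousMap.dist_lt_iff hε).2 fun x => (hFh x (mem_univ x)).2.2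
  · ext x
    exact (hFh x (mem_univ x)).1
end

section
/- Let S be a cancellative monoid and let ℓ₁(S) be the semigroup Banach algebra of S (over ℝ or ℂ) with convolution product. If the set of invertible elements of ℓ₁(S) is dense in ℓ₁(S), then S is a group. Consequently, if S is a cancellative monoid that is not a group, then multiplication (convolution) in ℓ₁(S) is not open. -/
open scoped ENNReal

/-- The convolution of two elements of `ℓ₁(S)` is again in `ℓ₁(S)`. -/
theorem l1Conv_memℓp {S : Type*} [Monoid S] {𝕜 : Type*} [RCLike 𝕜]
    (x y : lp (fun _ : S => 𝕜) 1) :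
    Memℓp (fun t : S => ∑' p : {p : S × S // p.1 * p.2 = t}, x p.val.1 * y p.val.2) 1 := by
  have hone : (0:ℝ) < (1 : ℝ≥0∞).toReal := by simp
  have hx : Summable fun r : S => ‖x r‖ := by
    have := (memℓp_gen_iff hone).1 (lp.memℓp x); simpa using this
  have hy : Summable fun s : S => ‖y s‖ := by
    have := (memℓp_gen_iff hone).1 (lp.memℓp y); simpa using this
  have hxy : Summable fun p : S × S => ‖x p.1 * y p.2‖ := hx.mul_norm hy
  have hsig : Summable fun q : Σ t : S, {p : S × S // p.1 * p.2 = t} =>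
      ‖x q.2.val.1 * y q.2.val.2‖ :=
    ((Equiv.sigmaFiberEquiv (fun p : S × S => p.1 * p.2)).summable_iff
      (f := fun p : S × S => ‖x p.1 * y p.2‖)).2 hxy
  have hsum : Summable fun t : S =>
      ∑' p : {p : S × S // p.1 * p.2 = t}, ‖x p.val.1 * y p.val.2‖ := hsig.sigma
  apply memℓp_gen
  simp only [ENNReal.toReal_one, Real.rpow_one]
  refine Summable.of_nonneg_of_le (fun t => norm_nonneg _) (fun t => ?_) hsum
  exact norm_tsum_le_tsum_norm (hsig.sigma_factor t)

/-- The convolution product on `ℓ₁(S)` for a (multiplicative) monoid `S`: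
`(x ∗ y)(t) = ∑_{r·s = t} x(r) y(s)`. -/
noncomputable def l1Conv {S : Type*} [Monoid S] {𝕜 : Type*} [RCLike 𝕜]
    (x y : lp (fun _ : S => 𝕜) 1) : lp (fun _ : S => 𝕜) 1 :=
  ⟨fun t => ∑' p : {p : S × S // p.1 * p.2 = t}, x p.val.1 * y p.val.2, l1Conv_memℓp x y⟩

/-- The identity of `ℓ₁(S)`: the indicator of the neutral element of the monoid `S`. -/
noncomputable def l1One (S : Type*) [Monoid S] (𝕜 : Type*) [RCLike 𝕜] :
    lp (fun _ : S => 𝕜) 1 :=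
  letI := Classical.decEq S
  lp.single 1 (1 : S) (1 : 𝕜)

/-! If `s` is not a unit of a left-cancellative monoid `S`, then `1 ∉ sS` (left-cancellative
monoids are Dedekind-finite), and left convolution by `δ_s` carries `y` isometrically onto a
function supported on `sS`. Hence `‖δ_s ∗ y - c δ_1‖ ≥ ‖y‖ + ‖c‖`, whereas for `‖x - δ_s‖ ≤ 1`
submultiplicativity of the `ℓ¹` norm gives `‖δ_s ∗ y - x ∗ y‖ ≤ ‖y‖`. So `x ∗ y = c δ_1` forces
`c = 0`: no element of the closed unit ball around `δ_s` has a right inverse, and the multiples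
`c δ_1 ≠ 0` close to `δ_s ∗ 0 = 0` are not products of elements of `B(δ_s, 1)` and `B(0, 1)`. -/

section

variable {𝕜 : Type*} [RCLike 𝕜] {S : Type*}

local notation "ℓ¹" => lp (fun _ : S => 𝕜) 1

lemma lp_one_summable_norm (x : ℓ¹) : Summable fun t => ‖x t‖ := by
  simpa using (memℓp_gen_iff (p := 1) (by simp)).1 (lp.memℓp x)

lemma lp_one_norm_eq_tsum (x : ℓ¹) : ‖x‖ = ∑' t, ‖x t‖ := by
  simpa using lp.norm_eq_tsum_rpow (p := 1) (by simp) x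

lemma norm_apply_add_tsum_norm_comp_le (x : ℓ¹) {α : Type*} {g : α → S}
    (hg : Function.Injective g) {t : S} (ht : ∀ a, g a ≠ t) :
    ‖x t‖ + ∑' a, ‖x (g a)‖ ≤ ‖x‖ := by
  classical
  have hx := lp_one_summable_norm x
  have hrest : ∑' a, ‖x (g a)‖ ≤ ∑' u, if u = t then 0 else ‖x u‖ :=
    (hx.comp_injective hg).tsum_le_tsum_of_inj g hg
      (fun _ _ => by split_ifs <;> positivity) (fun a => by simp [ht a])
      (hx.of_nonneg_of_le (fun _ => by split_ifs <;> positivity)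
        (fun _ => by split_ifs <;> simp))
  rw [lp_one_norm_eq_tsum, hx.tsum_eq_add_tsum_ite t]
  exact add_le_add_right hrest _

lemma summable_norm_mul_mul (x y : ℓ¹) : Summable fun p : S × S => ‖x p.1 * y p.2‖ := by
  simpa only [norm_mul] using (lp_one_summable_norm x).mul_norm (lp_one_summable_norm y)

noncomputable def l1Delta (s : S) : ℓ¹ :=
  letI := Classical.decEq S
  lp.single 1 s 1

lemma l1Delta_apply_self (s : S) : (l1Delta s : ℓ¹) s = 1 := by
  classical
  exact lp.single_apply_self 1 s _

lemma l1Delta_apply_of_ne {s t : S} (h : t ≠ s) : (l1Delta s : ℓ¹) t = 0 := by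
  classical
  exact lp.single_apply_ne 1 s _ h

lemma norm_l1Delta (s : S) : ‖(l1Delta s : ℓ¹)‖ = 1 := by
  classical
  exact (lp.norm_single (E := fun _ : S => 𝕜) (p := 1) one_pos s 1).trans norm_one

section Monoid

variable [Monoid S]

lemma summable_mul_fiber (x y : ℓ¹) (t : S) :
    Summable fun p : {p : S × S // p.1 * p.2 = t} => x p.1.1 * y p.1.2 :=
  ((summable_norm_mul_mul x y).comp_injective Subtype.val_injective).of_norm

lemma l1Conv_apply (x y : ℓ¹) (t : S) :
    l1Conv x y t = ∑' p : {p : S × S // p.1 * p.2 = t}, x p.1.1 * y p.1.2 := rfl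

lemma norm_l1Conv_le (x y : ℓ¹) : ‖l1Conv x y‖ ≤ ‖x‖ * ‖y‖ := by
  have hprod := summable_norm_mul_mul x y
  have hfib := hprod.hasSum.tsum_fiberwise fun p => p.1 * p.2
  calc ‖l1Conv x y‖ = ∑' t, ‖l1Conv x y t‖ := lp_one_norm_eq_tsum _
    _ ≤ ∑' t, ∑' p : {p : S × S // p.1 * p.2 = t}, ‖x p.1.1 * y p.1.2‖ :=
        (lp_one_summable_norm _).tsum_le_tsum
          (fun t => norm_tsum_le_tsum_norm (hprod.comp_injective Subtype.val_injective))
          hfib.summable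
    _ = ∑' p : S × S, ‖x p.1 * y p.2‖ := hfib.tsum_eq
    _ = ‖x‖ * ‖y‖ := by
        simp only [norm_mul, lp_one_norm_eq_tsum]
        exact (tsum_mul_tsum_of_summable_norm (f := fun t => ‖x t‖) (g := fun t => ‖y t‖)
          (by simpa using lp_one_summable_norm x) (by simpa using lp_one_summable_norm y)).symm

lemma l1Conv_zero_right (x : ℓ¹) : l1Conv x 0 = 0 :=
  norm_le_zero_iff.mp <| by simpa using norm_l1Conv_le x 0

lemma l1Conv_sub_left (x x' y : ℓ¹) : l1Conv (x - x') y = l1Conv x y - l1Conv x' y := by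
  ext t
  simp only [lp.coeFn_sub, Pi.sub_apply, l1Conv_apply, sub_mul]
  exact (summable_mul_fiber x y t).tsum_sub (summable_mul_fiber x' y t)

lemma l1One_eq_l1Delta : l1One S 𝕜 = l1Delta 1 := rfl

end Monoid

section LeftCancelMonoid

variable [LeftCancelMonoid S]

lemma l1Conv_l1Delta_apply_mul (s q : S) (y : ℓ¹) : l1Conv (l1Delta s) y (s * q) = y q := by
  rw [l1Conv_apply, tsum_eq_single ⟨(s, q), rfl⟩, l1Delta_apply_self, one_mul]
  rintro ⟨⟨a, b⟩, hab⟩ hne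
  have ha : a ≠ s := by
    rintro rfl
    obtain rfl : b = q := mul_left_cancel hab
    exact hne rfl
  rw [l1Delta_apply_of_ne ha, zero_mul]

lemma l1Conv_l1Delta_apply_of_forall_mul_ne {s t : S} (h : ∀ q, s * q ≠ t) (y : ℓ¹) :
    l1Conv (l1Delta s) y t = 0 := by
  rw [l1Conv_apply]
  refine (tsum_congr fun p => ?_).trans tsum_zero
  have hp : p.1.1 ≠ s := fun hs => h p.1.2 (hs ▸ p.2)
  rw [l1Delta_apply_of_ne hp, zero_mul]

lemma norm_add_norm_le_norm_l1Conv_l1Delta_sub {s : S} (hs : ¬IsUnit s) (y : ℓ¹) (c : 𝕜) :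
    ‖y‖ + ‖c‖ ≤ ‖l1Conv (l1Delta s) y - c • l1One S 𝕜‖ := by
  have hs1 : ∀ q, s * q ≠ 1 := fun q h => hs (.of_mul_eq_one q h)
  have h1 : (l1Conv (l1Delta s) y - c • l1One S 𝕜) 1 = -c := by
    rw [lp.coeFn_sub, lp.coeFn_smul, Pi.sub_apply, Pi.smul_apply, l1One_eq_l1Delta,
      l1Conv_l1Delta_apply_of_forall_mul_ne hs1, l1Delta_apply_self, smul_eq_mul, mul_one, zero_sub]
  have hmul : ∀ q, (l1Conv (l1Delta s) y - c • l1One S 𝕜) (s * q) = y q := by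
    intro q
    rw [lp.coeFn_sub, lp.coeFn_smul, Pi.sub_apply, Pi.smul_apply, l1One_eq_l1Delta,
      l1Conv_l1Delta_apply_mul, l1Delta_apply_of_ne (hs1 q), smul_zero, sub_zero]
  have := norm_apply_add_tsum_norm_comp_le (l1Conv (l1Delta s) y - c • l1One S 𝕜)
    (mul_right_injective s) hs1
  simp only [h1, hmul, norm_neg, ← lp_one_norm_eq_tsum] at this
  linarith

lemma l1Conv_ne_smul_l1One {s : S} (hs : ¬IsUnit s) {x : ℓ¹} (hx : ‖x - l1Delta s‖ ≤ 1)
    (y : ℓ¹) {c : 𝕜} (hc : c ≠ 0) : l1Conv x y ≠ c • l1One S 𝕜 := by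
  intro hxy
  have hdiff : l1Conv (l1Delta s) y - c • l1One S 𝕜 = l1Conv (l1Delta s - x) y := by
    rw [l1Conv_sub_left, hxy]
  have hc' : ‖c‖ ≤ 0 := by
    have key := norm_add_norm_le_norm_l1Conv_l1Delta_sub hs y c
    rw [hdiff] at key
    have hy : ‖l1Conv (l1Delta s - x) y‖ ≤ ‖y‖ := by
      calc ‖l1Conv (l1Delta s - x) y‖ ≤ ‖l1Delta s - x‖ * ‖y‖ := norm_l1Conv_le _ _
        _ ≤ 1 * ‖y‖ := by rw [norm_sub_rev]; gcongr
        _ = ‖y‖ := one_mul _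
    linarith
  exact hc (norm_le_zero_iff.mp hc')

end LeftCancelMonoid

end

/-- If `S` is a cancellative monoid and the invertible elements of `ℓ₁(S)` (with the
convolution product) are dense, then `S` is a group.  Consequently, if `S` is not a
group then convolution in `ℓ₁(S)` is not open. -/
theorem l1_cancellative_monoid_dense_invertibles
    {𝕜 : Type*} [RCLike 𝕜] {S : Type*} [CancelMonoid S] :
    (Dense {x : lp (fun _ : S => 𝕜) 1 |
        ∃ y, l1Conv x y = l1One S 𝕜 ∧ l1Conv y x = l1One S 𝕜} →
      ∀ s : S, IsUnit s) ∧
    ((¬ ∀ s : S, IsUnit s) →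
      ¬ ∀ (x y : lp (fun _ : S => 𝕜) 1), ∀ ε > 0, ∃ δ > 0,
          Metric.ball (l1Conv x y) δ ⊆
            Set.image2 l1Conv (Metric.ball x ε) (Metric.ball y ε)) := by
  refine ⟨fun hdense s => ?_, fun hS hopen => ?_⟩
  · by_contra hs
    obtain ⟨x, hx, y, hxy, -⟩ := Metric.dense_iff.1 hdense (l1Delta s) 1 one_pos
    refine l1Conv_ne_smul_l1One hs (mem_ball_iff_norm.1 hx).le y one_ne_zero ?_
    rw [hxy, one_smul]
  · obtain ⟨s, hs⟩ := not_forall.1 hS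
    obtain ⟨δ, hδ, hball⟩ := hopen (l1Delta s) 0 1 one_pos
    set c : 𝕜 := ((δ / 2 : ℝ) : 𝕜)
    have hc : ‖c‖ = δ / 2 := by rw [RCLike.norm_ofReal, abs_of_pos (half_pos hδ)]
    have hmem : c • l1One S 𝕜 ∈ Metric.ball (l1Conv (l1Delta s) 0) δ := by
      rw [mem_ball_iff_norm, l1Conv_zero_right, sub_zero, norm_smul, l1One_eq_l1Delta,
        norm_l1Delta, mul_one, hc]
      exact half_lt_self hδ
    obtain ⟨u, hu, v, -, huv⟩ := hball hmem
    have hc0 : c ≠ 0 := norm_pos_iff.1 (hc ▸ half_pos hδ)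
    exact l1Conv_ne_smul_l1One hs (mem_ball_iff_norm.1 hu).le v hc0 huv
end

section
/- The Cauchy product (convolution) in ℓ₁(ℕ₀), the Banach algebra of absolutely summable scalar-valued (real or complex) sequences indexed by the non-negative integers with product (x ∗ y)(n) = Σ_{k=0}^{n} x(k) y(n−k), is not an open map from ℓ₁(ℕ₀) × ℓ₁(ℕ₀) to ℓ₁(ℕ₀). That is, there exist x, y ∈ ℓ₁(ℕ₀) and ε > 0 such that for every δ > 0 the ball B(x ∗ y, δ) is not contained in B(x, ε) ∗ B(y, ε). -/
open scoped ENNReal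

/-- The Cauchy product of two elements of `ℓ₁(ℕ₀)` is again in `ℓ₁(ℕ₀)`. -/
theorem cauchyProduct_memℓp {𝕜 : Type*} [RCLike 𝕜] (x y : lp (fun _ : ℕ => 𝕜) 1) :
    Memℓp (fun n : ℕ => ∑ k ∈ Finset.range (n + 1), x k * y (n - k)) 1 := by
  have hone : (0:ℝ) < (1 : ℝ≥0∞).toReal := by simp
  have hx : Summable fun r : ℕ => ‖x r‖ := by
    have := (memℓp_gen_iff hone).1 (lp.memℓp x); simpa using this
  have hy : Summable fun s : ℕ => ‖y s‖ := by
    have := (memℓp_gen_iff hone).1 (lp.memℓp y); simpa using this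
  apply memℓp_gen
  simp only [ENNReal.toReal_one, Real.rpow_one]
  exact summable_norm_sum_mul_range_of_summable_norm hx hy

/-- The Cauchy product (convolution) on `ℓ₁(ℕ₀)`:
`(x ∗ y)(n) = ∑_{k=0}^{n} x(k) y(n−k)`. -/
noncomputable def cauchyProduct {𝕜 : Type*} [RCLike 𝕜]
    (x y : lp (fun _ : ℕ => 𝕜) 1) : lp (fun _ : ℕ => 𝕜) 1 :=
  ⟨fun n => ∑ k ∈ Finset.range (n + 1), x k * y (n - k), cauchyProduct_memℓp x y⟩

/-! Write `eₙ = lp.single 1 n 1`. Take `x = e₁`, `y = 0` and `ε = 1`; every `c • e₀` with small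
`c ≠ 0` is close to `x ∗ y = 0`. If `u ∗ v = c • e₀`, then `c • e₀ - e₁ ∗ v = (u - e₁) ∗ v`, and on
the left `c • e₀` and the shift `e₁ ∗ v` have disjoint supports, so `‖c‖ + ‖v‖ ≤ ‖u - e₁‖ * ‖v‖`.
Hence `‖u - e₁‖ ≥ 1`. -/

open scoped lp
open Finset

namespace lp

variable {α : Type*} {E : α → Type*} [∀ i, NormedAddCommGroup (E i)]

theorem summable_norm_of_one (f : lp E 1) : Summable fun i => ‖f i‖ := by
  refine ((memℓp_gen_iff (p := 1) (by norm_num)).1 (lp.memℓp f)).congr fun i => ?_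
  rw [ENNReal.toReal_one, Real.rpow_one]

theorem norm_eq_tsum_norm_of_one (f : lp E 1) : ‖f‖ = ∑' i, ‖f i‖ := by
  rw [norm_eq_tsum_rpow (by norm_num) f]
  simp only [ENNReal.toReal_one, Real.rpow_one, div_one]

theorem norm_eq_norm_zero_add_tsum_norm_succ {F : ℕ → Type*} [∀ n, NormedAddCommGroup (F n)]
    (f : lp F 1) : ‖f‖ = ‖f 0‖ + ∑' n, ‖f (n + 1)‖ := by
  rw [norm_eq_tsum_norm_of_one, (summable_norm_of_one f).tsum_eq_zero_add]

end lp

section CauchyProduct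

variable {𝕜 : Type*} [RCLike 𝕜]

theorem cauchyProduct_apply (x y : ℓ¹(ℕ, 𝕜)) (n : ℕ) :
    cauchyProduct x y n = ∑ k ∈ range (n + 1), x k * y (n - k) :=
  rfl

@[simp]
theorem cauchyProduct_zero_right (x : ℓ¹(ℕ, 𝕜)) : cauchyProduct x 0 = 0 := by
  ext n
  simp [cauchyProduct_apply]

theorem cauchyProduct_sub_left (x x' y : ℓ¹(ℕ, 𝕜)) :
    cauchyProduct (x - x') y = cauchyProduct x y - cauchyProduct x' y := by
  ext n
  simp [cauchyProduct_apply, sub_mul]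

theorem norm_cauchyProduct_le (x y : ℓ¹(ℕ, 𝕜)) : ‖cauchyProduct x y‖ ≤ ‖x‖ * ‖y‖ := by
  have hprod : HasSum (fun n => ∑ k ∈ range (n + 1), ‖x k‖ * ‖y (n - k)‖) (‖x‖ * ‖y‖) := by
    rw [lp.norm_eq_tsum_norm_of_one x, lp.norm_eq_tsum_norm_of_one y]
    refine hasSum_sum_range_mul_of_summable_norm (f := fun k => ‖x k‖) (g := fun k => ‖y k‖) ?_ ?_
    · simpa only [norm_norm] using lp.summable_norm_of_one x
    · simpa only [norm_norm] using lp.summable_norm_of_one y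
  rw [lp.norm_eq_tsum_norm_of_one]
  refine hasSum_le (fun n => ?_) (lp.summable_norm_of_one _).hasSum hprod
  rw [cauchyProduct_apply]
  exact (norm_sum_le _ _).trans_eq (sum_congr rfl fun k _ => norm_mul _ _)

theorem cauchyProduct_single_one_apply_zero (y : ℓ¹(ℕ, 𝕜)) :
    cauchyProduct (lp.single 1 1 1) y 0 = 0 := by
  simp [cauchyProduct_apply]

theorem cauchyProduct_single_one_apply_succ (y : ℓ¹(ℕ, 𝕜)) (n : ℕ) :
    cauchyProduct (lp.single 1 1 1) y (n + 1) = y n := by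
  rw [cauchyProduct_apply, sum_eq_single 1]
  · simp
  · intro k _ hk
    simp [hk]
  · simp

theorem norm_single_zero_sub_cauchyProduct_single_one (c : 𝕜) (y : ℓ¹(ℕ, 𝕜)) :
    ‖lp.single 1 0 c - cauchyProduct (lp.single 1 1 1) y‖ = ‖c‖ + ‖y‖ := by
  rw [lp.norm_eq_norm_zero_add_tsum_norm_succ, lp.norm_eq_tsum_norm_of_one y]
  simp [cauchyProduct_single_one_apply_zero, cauchyProduct_single_one_apply_succ]

theorem norm_add_norm_le_of_cauchyProduct_eq_single_zero {u v : ℓ¹(ℕ, 𝕜)} {c : 𝕜}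
    (h : cauchyProduct u v = lp.single 1 0 c) :
    ‖c‖ + ‖v‖ ≤ ‖u - lp.single 1 1 1‖ * ‖v‖ :=
  calc ‖c‖ + ‖v‖ = ‖cauchyProduct u v - cauchyProduct (lp.single 1 1 1) v‖ := by
        rw [h, norm_single_zero_sub_cauchyProduct_single_one]
    _ = ‖cauchyProduct (u - lp.single 1 1 1) v‖ := by rw [cauchyProduct_sub_left]
    _ ≤ ‖u - lp.single 1 1 1‖ * ‖v‖ := norm_cauchyProduct_le _ _

theorem one_le_dist_single_one_of_cauchyProduct_eq_single_zero {u v : ℓ¹(ℕ, 𝕜)} {c : 𝕜}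
    (h : cauchyProduct u v = lp.single 1 0 c) (hc : c ≠ 0) :
    1 ≤ dist u (lp.single 1 1 1) := by
  have hle := norm_add_norm_le_of_cauchyProduct_eq_single_zero h
  rw [dist_eq_norm]
  by_contra! hlt
  nlinarith [norm_pos_iff.2 hc, norm_nonneg v]

end CauchyProduct

/-- The Cauchy product in `ℓ₁(ℕ₀)` (real or complex scalars) is not an open map:
there are `x, y ∈ ℓ₁(ℕ₀)` and `ε > 0` such that for no `δ > 0` is the ball
`B(x ∗ y, δ)` contained in `B(x, ε) ∗ B(y, ε)`. -/
theorem cauchyProduct_not_open {𝕜 : Type*} [RCLike 𝕜] :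
    ∃ (x y : lp (fun _ : ℕ => 𝕜) 1), ∃ ε > 0, ∀ δ > 0,
      ¬ Metric.ball (cauchyProduct x y) δ ⊆
          Set.image2 cauchyProduct (Metric.ball x ε) (Metric.ball y ε) := by
  refine ⟨lp.single 1 1 1, 0, 1, one_pos, fun δ hδ hball => ?_⟩
  have hc : ‖((δ / 2 : ℝ) : 𝕜)‖ = δ / 2 := by
    rw [RCLike.norm_ofReal, abs_of_pos (half_pos hδ)]
  have hmem :
      lp.single 1 0 ((δ / 2 : ℝ) : 𝕜) ∈ Metric.ball (cauchyProduct (lp.single 1 1 1) 0) δ := by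
    rw [cauchyProduct_zero_right, mem_ball_zero_iff, lp.norm_single one_pos, hc]
    exact half_lt_self hδ
  obtain ⟨u, hu, v, -, huv⟩ := hball hmem
  refine (one_le_dist_single_one_of_cauchyProduct_eq_single_zero huv ?_).not_gt hu
  exact norm_ne_zero_iff.1 (by rw [hc]; positivity)
end

section
/- Let E be a Banach space which contains a proper closed subspace F that is isomorphic to E (as a topological vector space) and complemented in E. Then multiplication in the Banach algebra 𝓑(E) of all bounded linear operators on E is not open. -/
open Pointwise

/-!
If `s * t = 1` and `t` is not invertible, then `q = t * s` is idempotent and `q + c • (1 - q)`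
is invertible for every scalar `c ≠ 0`, so there are invertible elements arbitrarily close to
`t * s`. Suppose one of them factors as `a * b` with `a` close to `t`. Then `s * a` is close to
`s * t = 1`, hence invertible, so `a` has a left inverse, while `b * (a * b)⁻¹` is a right
inverse of `a`. Thus `a`, hence `s = (s * a) * a⁻¹`, hence its one-sided inverse `t`, are
invertible: a contradiction. In `𝓑(E)` take for `t` the isomorphism `E ≃ F` followed by the
inclusion of `F`, and for `s` a projection onto `F` followed by the isomorphism `F ≃ E`.
-/

open Metric Topology

lemma IsIdempotentElem.isUnit_add_smul_one_sub {𝕜 R : Type*} [Field 𝕜] [Ring R] [Algebra 𝕜 R]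
    {q : R} (hq : IsIdempotentElem q) {a : 𝕜} (ha : a ≠ 0) : IsUnit (q + a • (1 - q)) := by
  have key : ∀ b c : 𝕜, (q + b • (1 - q)) * (q + c • (1 - q)) = q + (b * c) • (1 - q) := by
    intro b c
    simp only [add_mul, mul_add, smul_mul_assoc, mul_smul_comm, smul_smul, hq.eq,
      hq.mul_one_sub_self, hq.one_sub_mul_self, hq.one_sub.eq, smul_zero, add_zero, zero_add,
      mul_comm c b]
  refine isUnit_iff_exists.2 ⟨q + a⁻¹ • (1 - q), ?_, ?_⟩ <;>
    simp [key, ha]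

lemma isUnit_of_isUnit_mul_of_mul_eq_one {M : Type*} [Monoid M] {s a c : M}
    (hsa : IsUnit (s * a)) (hac : a * c = 1) : IsUnit a := by
  obtain ⟨u, hu⟩ := hsa
  refine isUnit_iff_exists_and_exists.2 ⟨⟨c, hac⟩, ↑u⁻¹ * s, ?_⟩
  rw [mul_assoc, ← hu, Units.inv_mul]

lemma IsUnit.right_of_mul_eq_one {M : Type*} [Monoid M] {s t : M} (hs : IsUnit s)
    (hst : s * t = 1) : IsUnit t := by
  obtain ⟨u, rfl⟩ := hs
  exact Units.mul_eq_one_iff_inv_eq.1 hst ▸ u⁻¹.isUnit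

lemma isUnit_mul_of_mul_eq_one_of_norm_mul_lt {R : Type*} [NormedRing R]
    [HasSummableGeomSeries R] {s t a : R} (hst : s * t = 1) (h : ‖s‖ * ‖t - a‖ < 1) :
    IsUnit (s * a) := by
  have : ‖1 - s * a‖ < 1 := by
    rw [← hst, ← mul_sub]
    exact (norm_mul_le _ _).trans_lt h
  simpa using (Units.oneSub _ this).isUnit

lemma exists_ne_zero_norm_smul_lt (𝕜 : Type*) {R : Type*} [NontriviallyNormedField 𝕜]
    [SeminormedAddCommGroup R] [NormedSpace 𝕜 R] (x : R) {δ : ℝ} (hδ : 0 < δ) :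
    ∃ a : 𝕜, a ≠ 0 ∧ ‖a • x‖ < δ := by
  have hsmall : ∀ᶠ a : 𝕜 in 𝓝[≠] 0, ‖a • x‖ < δ :=
    nhdsWithin_le_nhds <| (continuous_id.smul continuous_const).norm.tendsto' (0 : 𝕜) 0
      (by simp) |>.eventually (gt_mem_nhds hδ)
  exact ((eventually_mem_nhdsWithin (a := (0 : 𝕜))).and hsmall).exists

theorem not_forall_ball_mul_subset_of_mul_eq_one (𝕜 : Type*) {R : Type*}
    [NontriviallyNormedField 𝕜] [NormedRing R] [NormedAlgebra 𝕜 R] [HasSummableGeomSeries R]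
    {s t : R} (hst : s * t = 1) (ht : ¬ IsUnit t) :
    ¬ ∀ ε > 0, ∃ δ > 0, ball (t * s) δ ⊆ ball t ε * ball s ε := by
  intro hopen
  have hq : IsIdempotentElem (t * s) := by
    rw [IsIdempotentElem, mul_assoc, ← mul_assoc s, hst, one_mul]
  obtain ⟨δ, hδ, hball⟩ := hopen (‖s‖ + 1)⁻¹ (by positivity)
  obtain ⟨c, hc, hcδ⟩ := exists_ne_zero_norm_smul_lt 𝕜 (1 - t * s) hδ
  obtain ⟨w, hw⟩ := hq.isUnit_add_smul_one_sub hc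
  obtain ⟨a, ha, b, -, hab⟩ := hball (show (w : R) ∈ ball (t * s) δ by
    rwa [mem_ball, dist_eq_norm, hw, add_sub_cancel_left])
  have hsa : IsUnit (s * a) := by
    refine isUnit_mul_of_mul_eq_one_of_norm_mul_lt hst ?_
    rw [mem_ball, dist_eq_norm'] at ha
    calc ‖s‖ * ‖t - a‖ ≤ ‖s‖ * (‖s‖ + 1)⁻¹ := by gcongr
      _ < 1 := by rw [mul_inv_lt_iff₀ (by positivity)]; linarith
  have hab : a * b = w := hab
  have ha : IsUnit a := isUnit_of_isUnit_mul_of_mul_eq_one hsa (c := b * ↑w⁻¹) <| by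
    rw [← mul_assoc, hab, Units.mul_inv]
  have hs : IsUnit s := by simpa [mul_assoc] using hsa.mul ha.unit⁻¹.isUnit
  exact ht (hs.right_of_mul_eq_one hst)

lemma Submodule.not_isUnit_subtypeL_comp {𝕜 E : Type*} [Semiring 𝕜] [AddCommMonoid E]
    [Module 𝕜 E] [TopologicalSpace E] {F : Submodule 𝕜 E} (hF : F ≠ ⊤) (g : E →L[𝕜] F) :
    ¬ IsUnit (F.subtypeL.comp g) := by
  intro h
  obtain ⟨b, hb⟩ := h.exists_right_inv
  refine hF (F.eq_top_iff'.2 fun y ↦ ?_)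
  have hy : F.subtypeL.comp g (b y) = y := DFunLike.congr_fun hb y
  exact hy ▸ (g (b y)).2

theorem BE_multiplication_not_open_general
    {𝕜 : Type*} [RCLike 𝕜] {E : Type*} [NormedAddCommGroup E] [NormedSpace 𝕜 E]
    [CompleteSpace E] (F : Submodule 𝕜 E)
    (hproper : F ≠ ⊤) (hcompl : Submodule.ClosedComplemented F)
    (hiso : Nonempty (F ≃L[𝕜] E)) :
    ¬ ∀ (T S : E →L[𝕜] E), ∀ ε > 0, ∃ δ > 0,
        Metric.ball (T * S) δ ⊆ Metric.ball T ε * Metric.ball S ε := by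
  obtain ⟨e⟩ := hiso
  obtain ⟨p, hp⟩ := hcompl
  set T := F.subtypeL.comp (e.symm : E →L[𝕜] F)
  set S := (e : F →L[𝕜] E).comp p
  have hST : S * T = 1 := by
    ext x
    simp [S, T, hp]
  intro hopen
  exact not_forall_ball_mul_subset_of_mul_eq_one 𝕜 hST (F.not_isUnit_subtypeL_comp hproper _)
    (hopen T S)

/-- If a Banach space `E` contains a proper closed complemented subspace `F` isomorphic
to `E`, then multiplication (composition) in `𝓑(E)` is not open. -/
theorem BE_multiplication_not_open
    {𝕜 : Type*} [RCLike 𝕜] {E : Type*} [NormedAddCommGroup E] [NormedSpace 𝕜 E]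
    [CompleteSpace E] (F : Submodule 𝕜 E) (hclosed : IsClosed (F : Set E))
    (hproper : F ≠ ⊤) (hcompl : Submodule.ClosedComplemented F)
    (hiso : Nonempty (F ≃L[𝕜] E)) :
    ¬ ∀ (T S : E →L[𝕜] E), ∀ ε > 0, ∃ δ > 0,
        Metric.ball (T * S) δ ⊆ Metric.ball T ε * Metric.ball S ε :=
  BE_multiplication_not_open_general F hproper hcompl hiso
end

section
/- Let E be a Banach space which contains a proper closed subspace F that is isomorphic to E (as a topological vector space), complemented in E, and of infinite codimension in E (i.e., E/F is infinite-dimensional). Then multiplication in the Calkin algebra 𝓠(E) = 𝓑(E)/𝓚(E) is not open. -/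
/-!
Let `J : F ≃L E`, let `P` be a projection onto `F`, and put `U = J⁻¹ : E → F ⊆ E` and `V = J P`.
Then `V U = 1`, so `U V` is idempotent, hence a limit of the invertible operators
`U V + t (1 - U V)`. If multiplication in the Calkin algebra were open at `(π U, π V)`, some
`π T` with `‖T - U‖` small would therefore be right invertible: `T S = 1 + K` with `K` compact.
As `U` is bounded below with range in `F`, the range of `T` lies in a thin cone around `F`.
But `1 + K` maps some difference of two terms of a bounded `1`-separated sequence of `E ⧸ F`
(lifted to `E`) far outside that cone.
-/

open Pointwise Metric Filter Topology

section Idempotent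

variable {𝕜 A : Type*}

theorem IsIdempotentElem.add_smul_one_sub_mul_add_smul_one_sub [CommRing 𝕜] [Ring A]
    [Algebra 𝕜 A] {e : A} (he : IsIdempotentElem e) (s t : 𝕜) :
    (e + s • (1 - e)) * (e + t • (1 - e)) = e + (s * t) • (1 - e) := by
  simp only [add_mul, mul_add, smul_mul_assoc, mul_smul_comm, he.mul_one_sub_self,
    he.one_sub_mul_self, he.one_sub.eq, he.eq, smul_zero, add_zero, zero_add, smul_smul, mul_comm]

theorem IsIdempotentElem.isUnit_add_smul_one_sub_s16 [Field 𝕜] [Ring A] [Algebra 𝕜 A] {e : A}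
    (he : IsIdempotentElem e) {t : 𝕜} (ht : t ≠ 0) : IsUnit (e + t • (1 - e)) := by
  refine ⟨⟨_, e + t⁻¹ • (1 - e), ?_, ?_⟩, rfl⟩ <;>
    simp [he.add_smul_one_sub_mul_add_smul_one_sub, ht]

theorem IsIdempotentElem.mem_closure_isUnit [NontriviallyNormedField 𝕜] [NormedRing A]
    [NormedAlgebra 𝕜 A] {e : A} (he : IsIdempotentElem e) : e ∈ closure {a : A | IsUnit a} := by
  have hlim : Tendsto (fun t : 𝕜 => e + t • (1 - e)) (𝓝[≠] 0) (𝓝 e) := by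
    refine Tendsto.mono_left ?_ nhdsWithin_le_nhds
    simpa using ((tendsto_id (x := 𝓝 (0 : 𝕜))).smul_const (1 - e)).const_add e
  exact mem_closure_of_tendsto hlim
    (eventually_nhdsWithin_of_forall fun t ht => he.isUnit_add_smul_one_sub_s16 ht)

end Idempotent

theorem exists_mem_ball_mul_eq_one_of_mem_closure {M : Type*} [Monoid M] [PseudoMetricSpace M]
    {a b : M} (hopen : ∀ ε > 0, ∃ δ > 0, ball (a * b) δ ⊆ ball a ε * ball b ε)
    (hab : a * b ∈ closure {c : M | ∃ d, c * d = 1}) {ε : ℝ} (hε : 0 < ε) :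
    ∃ a' ∈ ball a ε, ∃ d, a' * d = 1 := by
  obtain ⟨δ, hδ, hball⟩ := hopen ε hε
  obtain ⟨c, ⟨d, hcd⟩, hc⟩ := Metric.mem_closure_iff.mp hab δ hδ
  obtain ⟨a', ha', b', -, rfl⟩ := hball (mem_ball_comm.mp hc)
  exact ⟨a', ha', b' * d, by rw [← mul_assoc, hcd]⟩

theorem IsCompactOperator.exists_ne_dist_apply_lt {𝕜 E E' : Type*} [NontriviallyNormedField 𝕜]
    [NormedAddCommGroup E] [NormedSpace 𝕜 E] [NormedAddCommGroup E'] [NormedSpace 𝕜 E']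
    {K : E →L[𝕜] E'} (hK : IsCompactOperator K) {w : ℕ → E}
    (hw : Bornology.IsBounded (Set.range w)) {ε : ℝ} (hε : 0 < ε) :
    ∃ m n, m ≠ n ∧ dist (K (w m)) (K (w n)) < ε := by
  have hcpt := hK.isCompact_closure_image_of_bounded (f := (K : E →ₗ[𝕜] E')) hw
  obtain ⟨L, -, φ, hφ, hlim⟩ := hcpt.tendsto_subseq fun n =>
    subset_closure (Set.mem_image_of_mem _ (Set.mem_range_self n))
  obtain ⟨N, hN⟩ := Metric.cauchySeq_iff'.mp hlim.cauchySeq ε hε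
  exact ⟨φ (N + 1), φ N, (hφ N.lt_succ_self).ne', hN (N + 1) N.le_succ⟩

section Quotient

variable {𝕜 E : Type*} [RCLike 𝕜] [NormedAddCommGroup E] [NormedSpace 𝕜 E]
  {F : Submodule 𝕜 E} [IsClosed (F : Set E)]

theorem exists_seq_norm_le_one_le_norm_mkQ_sub (hF : ¬ FiniteDimensional 𝕜 (E ⧸ F)) :
    ∃ w : ℕ → E, (∀ n, ‖w n‖ ≤ 4) ∧ Pairwise fun m n => 1 ≤ ‖F.mkQ (w m - w n)‖ := by
  obtain ⟨f, hf_le, hf_sep⟩ := exists_seq_norm_le_one_le_norm_sub' (c := (2 : 𝕜))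
    (by simp) (by norm_num [RCLike.norm_two] : ‖(2 : 𝕜)‖ < 3) hF
  choose w hw_mk hw_lt using fun n => Submodule.Quotient.norm_mk_lt (f n) one_pos
  refine ⟨w, fun n => by linarith [hw_lt n, hf_le n], fun m n hmn => ?_⟩
  simpa [hw_mk] using hf_sep hmn

theorem exists_norm_add_apply_lt_norm_mkQ (hF : ¬ FiniteDimensional 𝕜 (E ⧸ F))
    {K : E →L[𝕜] E} (hK : IsCompactOperator K) :
    ∃ z : E, ‖z + K z‖ < 11 * ‖F.mkQ (z + K z)‖ := by
  obtain ⟨w, hw_le, hw_sep⟩ := exists_seq_norm_le_one_le_norm_mkQ_sub hF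
  have hw_bdd : Bornology.IsBounded (Set.range w) :=
    isBounded_iff_forall_norm_le.mpr ⟨4, Set.forall_mem_range.mpr hw_le⟩
  obtain ⟨m, n, hmn, hK_close⟩ := hK.exists_ne_dist_apply_lt hw_bdd (by norm_num : (0 : ℝ) < 1 / 4)
  refine ⟨w m - w n, ?_⟩
  rw [dist_eq_norm, ← map_sub] at hK_close
  have hz : ‖w m - w n‖ ≤ 8 := (norm_sub_le _ _).trans (by linarith [hw_le m, hw_le n])
  have hmk : ‖F.mkQ (w m - w n)‖ - ‖K (w m - w n)‖ ≤ ‖F.mkQ (w m - w n + K (w m - w n))‖ := by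
    calc _ ≤ ‖F.mkQ (w m - w n)‖ - ‖F.mkQ (K (w m - w n))‖ := by
          gcongr; exact Submodule.Quotient.norm_mk_le F _
      _ ≤ _ := by rw [map_add]; exact norm_sub_le_norm_add _ _
  linarith [norm_add_le (w m - w n) (K (w m - w n)), hw_sep hmn]

variable {U T : E →L[𝕜] E} {C : ℝ}

theorem norm_le_two_mul_norm_apply_of_norm_sub_le (hC : 0 ≤ C) (hU : ∀ x, ‖x‖ ≤ C * ‖U x‖)
    (hTU : C * ‖T - U‖ ≤ 1 / 2) (x : E) : ‖x‖ ≤ 2 * C * ‖T x‖ := by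
  have hUx : ‖U x‖ ≤ ‖T x‖ + ‖T - U‖ * ‖x‖ := by
    calc ‖U x‖ ≤ ‖T x‖ + ‖(T - U) x‖ := by
          simpa using norm_sub_le (T x) ((T - U) x)
      _ ≤ _ := by gcongr; exact (T - U).le_opNorm x
  nlinarith [hU x, mul_le_mul_of_nonneg_left hUx hC, mul_le_mul_of_nonneg_right hTU (norm_nonneg x)]

theorem norm_mkQ_apply_le (hC : 0 ≤ C) (hU : ∀ x, ‖x‖ ≤ C * ‖U x‖) (hUF : ∀ x, U x ∈ F)
    (hTU : C * ‖T - U‖ ≤ 1 / 2) (x : E) : ‖F.mkQ (T x)‖ ≤ 2 * C * ‖T - U‖ * ‖T x‖ := by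
  have hmk : F.mkQ (T x) = F.mkQ ((T - U) x) := by
    simp [(Submodule.Quotient.mk_eq_zero F).mpr (hUF x)]
  calc ‖F.mkQ (T x)‖ ≤ ‖(T - U) x‖ := hmk ▸ Submodule.Quotient.norm_mk_le F _
    _ ≤ ‖T - U‖ * ‖x‖ := (T - U).le_opNorm x
    _ ≤ ‖T - U‖ * (2 * C * ‖T x‖) := by
        gcongr; exact norm_le_two_mul_norm_apply_of_norm_sub_le hC hU hTU x
    _ = _ := by ring

theorem not_isCompactOperator_mul_sub_one (hF : ¬ FiniteDimensional 𝕜 (E ⧸ F)) (hC : 0 ≤ C)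
    (hU : ∀ x, ‖x‖ ≤ C * ‖U x‖) (hUF : ∀ x, U x ∈ F) (hTU : 22 * C * ‖T - U‖ ≤ 1)
    (S : E →L[𝕜] E) : ¬ IsCompactOperator (T * S - 1 : E →L[𝕜] E) := by
  intro hK
  obtain ⟨z, hz⟩ := exists_norm_add_apply_lt_norm_mkQ hF hK
  have hTSz : z + (T * S - 1) z = T (S z) := by simp
  rw [hTSz] at hz
  have := norm_mkQ_apply_le (T := T) hC hU hUF (by linarith) (S z)
  nlinarith [mul_le_mul_of_nonneg_right hTU (norm_nonneg (T (S z)))]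

end Quotient

theorem calkin_multiplication_not_open_general
    {𝕜 : Type*} [RCLike 𝕜] {E : Type*} [NormedAddCommGroup E] [NormedSpace 𝕜 E]
    {Q : Type*} [NormedRing Q]
    (F : Submodule 𝕜 E) (hclosed : IsClosed (F : Set E))
    (hcompl : Submodule.ClosedComplemented F)
    (hiso : Nonempty (F ≃L[𝕜] E)) (hcodim : ¬ FiniteDimensional 𝕜 (E ⧸ F))
    (π : (E →L[𝕜] E) →+* Q) (hsurj : Function.Surjective π)
    (hker : ∀ T : E →L[𝕜] E, π T = 0 ↔ IsCompactOperator T)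
    (hquot : ∀ (T : E →L[𝕜] E) (r : ℝ), π '' Metric.ball T r = Metric.ball (π T) r) :
    ¬ ∀ a b : Q, ∀ ε > 0, ∃ δ > 0,
        Metric.ball (a * b) δ ⊆ Metric.ball a ε * Metric.ball b ε := by
  intro hopen
  have := hclosed
  obtain ⟨J⟩ := hiso
  obtain ⟨P, hP⟩ := hcompl
  let U : E →L[𝕜] E := F.subtypeL ∘L (J.symm : E →L[𝕜] F)
  let V : E →L[𝕜] E := (J : F →L[𝕜] E) ∘L P
  set C := ‖(J : F →L[𝕜] E)‖
  have hU : ∀ x, ‖x‖ ≤ C * ‖U x‖ := fun x => by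
    simpa [U] using (J : F →L[𝕜] E).le_opNorm (J.symm x)
  have hVU : V * U = 1 := by ext x; simp [U, V, hP]
  have hUV : IsIdempotentElem (U * V) := by
    rw [IsIdempotentElem, mul_assoc, ← mul_assoc V, hVU, one_mul]
  have hπ : Continuous π := Metric.continuous_iff.mpr fun T r hr =>
    ⟨r, hr, fun S hS => (hquot T r).subset ⟨S, hS, rfl⟩⟩
  have hπUV : π U * π V ∈ closure {c : Q | ∃ d, c * d = 1} := by
    rw [← map_mul]
    exact map_mem_closure hπ (hUV.mem_closure_isUnit (𝕜 := 𝕜)) fun _ ⟨u, hu⟩ =>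
      ⟨π ↑u⁻¹, by rw [← hu, ← map_mul, u.mul_inv, map_one]⟩
  obtain ⟨_, ha, d, had⟩ := exists_mem_ball_mul_eq_one_of_mem_closure (hopen _ _) hπUV
    (by positivity : 0 < 1 / (22 * C + 1))
  obtain ⟨T, hTU, rfl⟩ := (hquot U _).symm ▸ ha
  obtain ⟨S, rfl⟩ := hsurj d
  refine not_isCompactOperator_mul_sub_one hcodim (norm_nonneg _) hU (fun x => (J.symm x).2) ?_ S
    ((hker _).mp (by rw [map_sub, map_mul, had, map_one, sub_self]))
  rw [mem_ball, dist_eq_norm, lt_div_iff₀ (by positivity)] at hTU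
  nlinarith [norm_nonneg (T - U)]

/-- If a Banach space `E` contains a proper closed complemented subspace `F` of infinite
codimension that is isomorphic to `E`, then multiplication in the Calkin algebra
`𝓠(E) = 𝓑(E)/𝓚(E)` is not open.  The Calkin algebra is modelled as a Banach algebra `Q`
together with a surjective ring homomorphism `π : 𝓑(E) →+* Q` whose kernel is exactly the
ideal of compact operators and which satisfies the quotient-norm identity
`π '' B(T, r) = B(π T, r)`. -/
theorem calkin_multiplication_not_open
    {𝕜 : Type*} [RCLike 𝕜] {E : Type*} [NormedAddCommGroup E] [NormedSpace 𝕜 E]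
    [CompleteSpace E] {Q : Type*} [NormedRing Q] [NormedAlgebra 𝕜 Q] [CompleteSpace Q]
    (F : Submodule 𝕜 E) (hclosed : IsClosed (F : Set E))
    (hproper : F ≠ ⊤) (hcompl : Submodule.ClosedComplemented F)
    (hiso : Nonempty (F ≃L[𝕜] E)) (hcodim : ¬ FiniteDimensional 𝕜 (E ⧸ F))
    (π : (E →L[𝕜] E) →+* Q) (hsurj : Function.Surjective π)
    (hker : ∀ T : E →L[𝕜] E, π T = 0 ↔ IsCompactOperator T)
    (hquot : ∀ (T : E →L[𝕜] E) (r : ℝ), π '' Metric.ball T r = Metric.ball (π T) r) :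
    ¬ ∀ a b : Q, ∀ ε > 0, ∃ δ > 0,
        Metric.ball (a * b) δ ⊆ Metric.ball a ε * Metric.ball b ε :=
  calkin_multiplication_not_open_general F hclosed hcompl hiso hcodim π hsurj hker hquot
end

section
/- Let E be a Banach space with the property that every Fredholm operator in 𝓑(E) has index 0. If the set of invertible elements of the Calkin algebra 𝓠(E) = 𝓑(E)/𝓚(E) is dense in 𝓠(E), then both 𝓑(E) and 𝓠(E) have weakly open multiplication. -/
/-!
An invertible `u ∈ B(a, ε)` gives the open set `u • B(b, ε) ⊆ B(a, ε) * B(b, ε)`, so multiplication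
is weakly open in every normed ring whose units are dense; for `𝓠(E)` this is the hypothesis.

For `𝓑(E)`, lift an invertible element of `𝓠(E)` near `π T` to an operator `A` near `T`. Being
invertible modulo compact operators, `A` has finite-dimensional kernel and cokernel, hence index
zero. Adding a small finite-rank operator that maps `ker A` isomorphically onto a complement of
`range A` makes `A` injective without changing its class modulo compacts, and index zero then
makes it surjective. The same finite-rank trick proves that `1 + K` has finite-dimensional
cokernel for compact `K`: otherwise `ker (1 + K)` embeds into the cokernel, the perturbed
operator `1 + K'` is injective, hence surjective by the Fredholm alternative, and then the
cokernel is the image of `ker (1 + K)`.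
-/

open Pointwise Function Metric

theorem interior_ball_mul_ball_nonempty_of_isUnit {R : Type*} [NormedRing R] {u a : R}
    (hu : IsUnit u) {ε : ℝ} (hua : u ∈ ball a ε) (b : R) (hε : 0 < ε) :
    (interior (ball a ε * ball b ε)).Nonempty := by
  obtain ⟨u, rfl⟩ := hu
  have hopen : IsOpen ((u : R) • ball b ε) := isOpen_ball.smul u
  have hsub : (u : R) • ball b ε ⊆ ball a ε * ball b ε := Set.smul_set_subset_mul hua
  exact ⟨u * b, hopen.subset_interior_iff.mpr hsub (Set.smul_mem_smul_set (mem_ball_self hε))⟩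

theorem interior_ball_mul_ball_nonempty_of_dense_isUnit {R : Type*} [NormedRing R]
    (h : Dense {x : R | IsUnit x}) (a b : R) {ε : ℝ} (hε : 0 < ε) :
    (interior (ball a ε * ball b ε)).Nonempty := by
  obtain ⟨u, hu, hua⟩ := h.exists_mem_open isOpen_ball ⟨a, mem_ball_self hε⟩
  exact interior_ball_mul_ball_nonempty_of_isUnit hu hua b hε

theorem LinearMap.injective_add_comp_of_injective_mkQ_comp {R M : Type*} [Ring R]
    [AddCommGroup M] [Module R M] (A : M →ₗ[R] M) (P : M →ₗ[R] A.ker)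
    (hP : ∀ x : A.ker, P x = x) (j : A.ker →ₗ[R] M) (hj : Injective (A.range.mkQ ∘ₗ j)) :
    Injective (A + j ∘ₗ P) := by
  rw [← LinearMap.ker_eq_bot, Submodule.eq_bot_iff]
  intro x hx
  have hAx : A.range.mkQ (A x) = 0 := (Submodule.Quotient.mk_eq_zero _).2 ⟨x, rfl⟩
  have hjPx := congrArg A.range.mkQ (LinearMap.mem_ker.1 hx)
  rw [LinearMap.add_apply, map_add, hAx, zero_add, map_zero] at hjPx
  have hPx : P x = 0 := hj (hjPx.trans (map_zero _).symm)
  have hxA : x ∈ A.ker := by simpa [hPx] using hx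
  simpa [hP ⟨x, hxA⟩] using congrArg Subtype.val hPx

section NontriviallyNormedField

variable {𝕜 E : Type*} [NontriviallyNormedField 𝕜] [NormedAddCommGroup E] [NormedSpace 𝕜 E]

variable (𝕜 E) in
def FredholmIndexZero : Prop :=
  ∀ T : E →L[𝕜] E, FiniteDimensional 𝕜 T.ker → FiniteDimensional 𝕜 (E ⧸ T.range) →
    Module.finrank 𝕜 T.ker = Module.finrank 𝕜 (E ⧸ T.range)

theorem FredholmIndexZero.surjective_of_injective (hfred : FredholmIndexZero 𝕜 E)
    {U : E →L[𝕜] E} (hU : Injective U) [FiniteDimensional 𝕜 (E ⧸ U.range)] : Surjective U := by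
  have hker : U.ker = ⊥ := LinearMap.ker_eq_bot.2 hU
  have hind := hfred U (by rw [hker]; infer_instance) ‹_›
  rw [hker, finrank_bot, eq_comm, Module.finrank_zero_iff, Submodule.Quotient.subsingleton_iff]
    at hind
  exact LinearMap.range_eq_top.1 hind


theorem IsCompactOperator.finiteDimensional_ker_one_add [CompleteSpace 𝕜] {K : E →L[𝕜] E}
    (hK : IsCompactOperator K) : FiniteDimensional 𝕜 (1 + K : E →L[𝕜] E).ker := by
  have hmaps : ∀ x ∈ (1 + K : E →L[𝕜] E).ker, (K : E →ₗ[𝕜] E) x ∈ (1 + K : E →L[𝕜] E).ker :=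
    fun x hx => by simp [eq_neg_of_add_eq_zero_right hx]
  have hid : (id : (1 + K : E →L[𝕜] E).ker → _) = -((K : E →ₗ[𝕜] E).restrict hmaps) := by
    funext x
    show x = -(K : E →ₗ[𝕜] E).restrict hmaps x
    rw [eq_neg_iff_add_eq_zero]
    exact Subtype.ext x.2
  exact .of_isCompactOperator_id
    (hid ▸ (hK.restrict hmaps (ContinuousLinearMap.isClosed_ker _)).neg)

theorem finiteDimensional_ker_of_isCompactOperator_mul_sub_one [CompleteSpace 𝕜]
    {A S : E →L[𝕜] E} (h : IsCompactOperator (S * A - 1 : E →L[𝕜] E)) :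
    FiniteDimensional 𝕜 A.ker := by
  have := h.finiteDimensional_ker_one_add
  refine Submodule.finiteDimensional_of_le (S₂ := (1 + (S * A - 1) : E →L[𝕜] E).ker)
    fun x (hx : A x = 0) => ?_
  simp [hx]

theorem IsCompactOperator.surjective_one_add_of_injective [CompleteSpace E] {K : E →L[𝕜] E}
    (hK : IsCompactOperator K) (hinj : Injective (1 + K : E →L[𝕜] E)) :
    Surjective (1 + K : E →L[𝕜] E) := by
  rcases hK.hasEigenvalue_or_mem_resolventSet (neg_ne_zero.2 (one_ne_zero (α := 𝕜))) with h | h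
  · obtain ⟨x, hx⟩ := h.exists_hasEigenvector
    refine absurd (hinj ?_) hx.2
    have hKx : K x = -x := by simpa using Module.End.mem_eigenspace_iff.1 hx.1
    simp [hKx]
  · rw [spectrum.mem_resolventSet_iff, ← IsUnit.neg_iff] at h
    have hneg : -(algebraMap 𝕜 (E →L[𝕜] E) (-1) - K) = 1 + K := by simp [add_comm]
    rw [hneg, ContinuousLinearMap.isUnit_iff_bijective] at h
    exact h.2

end NontriviallyNormedField

section RCLike

variable {𝕜 E : Type*} [RCLike 𝕜] [NormedAddCommGroup E] [NormedSpace 𝕜 E]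

theorem ContinuousLinearMap.exists_isCompactOperator_injective_add (A : E →L[𝕜] E)
    [FiniteDimensional 𝕜 A.ker] {i : A.ker →ₗ[𝕜] E ⧸ A.range} (hi : Injective i)
    {δ : ℝ} (hδ : 0 < δ) :
    ∃ F : E →L[𝕜] E, IsCompactOperator F ∧ ‖F‖ < δ ∧
      (∀ x, A.range.mkQ (F x) ∈ LinearMap.range i) ∧ Injective (A + F) := by
  obtain ⟨P, hP⟩ := Submodule.ClosedComplemented.of_finiteDimensional A.ker
  obtain ⟨j, hj⟩ := Module.projective_lifting_property A.range.mkQ i A.range.mkQ_surjective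
  set G : E →L[𝕜] E := LinearMap.toContinuousLinearMap j ∘L P
  obtain ⟨c, hc0, hc⟩ := NormedField.exists_norm_lt 𝕜 (show 0 < δ / (‖G‖ + 1) by positivity)
  refine ⟨c • G, ?_, ?_, fun x => ⟨c • P x, ?_⟩, ?_⟩
  · exact ((isCompactOperator_of_locallyCompactSpace_rng _).comp_clm P).smul c
  · have hcG := (lt_div_iff₀ (by positivity : (0 : ℝ) < ‖G‖ + 1)).1 hc
    rw [norm_smul]
    nlinarith [norm_nonneg c, norm_nonneg G]
  · rw [← hj]
    simp [G]
  · have hcj : Injective (A.range.mkQ ∘ₗ (c • j)) := by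
      rw [LinearMap.comp_smul, hj]
      exact (smul_right_injective _ (norm_pos_iff.1 hc0)).comp hi
    have := (A : E →ₗ[𝕜] E).injective_add_comp_of_injective_mkQ_comp P hP (c • j) hcj
    convert this using 1
    funext x
    simp [G]

theorem IsCompactOperator.finiteDimensional_quotient_range_one_add [CompleteSpace E]
    {K : E →L[𝕜] E} (hK : IsCompactOperator K) :
    FiniteDimensional 𝕜 (E ⧸ (1 + K : E →L[𝕜] E).range) := by
  set A : E →L[𝕜] E := 1 + K with hA
  have := hK.finiteDimensional_ker_one_add
  by_contra hinf
  obtain ⟨i, hi⟩ : ∃ i : A.ker →ₗ[𝕜] E ⧸ A.range, Injective i :=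
    rank_le_iff_exists_linearMap.1 <| (Module.rank_lt_aleph0 𝕜 _).le.trans <|
      not_lt.1 (mt Module.rank_lt_aleph0_iff.1 hinf)
  obtain ⟨F, hF, -, hFi, hinj⟩ := A.exists_isCompactOperator_injective_add hi one_pos
  have hKF : IsCompactOperator (K + F : E →L[𝕜] E) := hK.add hF
  have hsurj := hKF.surjective_one_add_of_injective (by rwa [← add_assoc])
  refine hinf (Module.Finite.of_surjective i fun q => ?_)
  obtain ⟨y, rfl⟩ := A.range.mkQ_surjective q
  obtain ⟨x, rfl⟩ := hsurj y
  have hAx : A.range.mkQ (A x) = 0 := (Submodule.Quotient.mk_eq_zero _).2 ⟨x, rfl⟩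
  rw [← add_assoc, ← hA, add_apply, map_add, hAx, zero_add]
  exact hFi x

theorem finiteDimensional_quotient_range_of_isCompactOperator_mul_sub_one [CompleteSpace E]
    {A S : E →L[𝕜] E} (h : IsCompactOperator (A * S - 1 : E →L[𝕜] E)) :
    FiniteDimensional 𝕜 (E ⧸ A.range) := by
  have := h.finiteDimensional_quotient_range_one_add
  have hle : (1 + (A * S - 1) : E →L[𝕜] E).range ≤ A.range := by
    rintro _ ⟨x, rfl⟩
    exact ⟨S x, by simp⟩
  exact Module.Finite.of_surjective _ (Submodule.factor_surjective hle)

theorem FredholmIndexZero.exists_isUnit_dist_lt [CompleteSpace E] (hfred : FredholmIndexZero 𝕜 E)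
    {A S : E →L[𝕜] E} (h₁ : IsCompactOperator (A * S - 1 : E →L[𝕜] E))
    (h₂ : IsCompactOperator (S * A - 1 : E →L[𝕜] E)) {δ : ℝ} (hδ : 0 < δ) :
    ∃ U : E →L[𝕜] E, IsUnit U ∧ dist U A < δ := by
  have := finiteDimensional_ker_of_isCompactOperator_mul_sub_one h₂
  have := finiteDimensional_quotient_range_of_isCompactOperator_mul_sub_one h₁
  obtain ⟨e⟩ := FiniteDimensional.nonempty_linearEquiv_of_finrank_eq (hfred A ‹_› ‹_›)
  obtain ⟨F, hF, hFδ, -, hinj⟩ := A.exists_isCompactOperator_injective_add e.injective hδ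
  have hUS : IsCompactOperator ((A + F) * S - 1 : E →L[𝕜] E) := by
    rw [add_mul, add_sub_right_comm]
    exact h₁.add (hF.comp_clm S)
  have := finiteDimensional_quotient_range_of_isCompactOperator_mul_sub_one hUS
  refine ⟨A + F, ContinuousLinearMap.isUnit_iff_bijective.2
    ⟨hinj, hfred.surjective_of_injective hinj⟩, ?_⟩
  rwa [dist_eq_norm, add_sub_cancel_left]

theorem FredholmIndexZero.dense_setOf_isUnit [CompleteSpace E] (hfred : FredholmIndexZero 𝕜 E)
    {Q : Type*} [NormedRing Q] (π : (E →L[𝕜] E) →+* Q) (hsurj : Surjective π)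
    (hker : ∀ T, π T = 0 → IsCompactOperator T)
    (hquot : ∀ T r, ball (π T) r ⊆ π '' ball T r) (hdense : Dense {q : Q | IsUnit q}) :
    Dense {T : E →L[𝕜] E | IsUnit T} := by
  refine Metric.dense_iff.2 fun T ε hε => ?_
  obtain ⟨q, hq, hqT⟩ :=
    hdense.exists_mem_open isOpen_ball ⟨π T, mem_ball_self (half_pos hε)⟩
  obtain ⟨A, hAT, rfl⟩ := hquot T _ hqT
  obtain ⟨S, hS⟩ := hsurj ↑hq.unit⁻¹
  have h₁ : IsCompactOperator (A * S - 1 : E →L[𝕜] E) := hker _ (by simp [hS])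
  have h₂ : IsCompactOperator (S * A - 1 : E →L[𝕜] E) := hker _ (by simp [hS])
  obtain ⟨U, hU, hUA⟩ := hfred.exists_isUnit_dist_lt h₁ h₂ (half_pos hε)
  refine ⟨U, ?_, hU⟩
  calc dist U T ≤ dist U A + dist A T := dist_triangle U A T
    _ < ε / 2 + ε / 2 := add_lt_add hUA hAT
    _ = ε := add_halves ε

end RCLike

theorem weakly_open_of_index_zero_and_tsr_one_calkin_general
    {𝕜 : Type*} [RCLike 𝕜] {E : Type*} [NormedAddCommGroup E] [NormedSpace 𝕜 E]
    [CompleteSpace E] {Q : Type*} [NormedRing Q]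
    (hfred : ∀ T : E →L[𝕜] E,
      FiniteDimensional 𝕜 (LinearMap.ker (T : E →ₗ[𝕜] E)) →
      FiniteDimensional 𝕜 (E ⧸ LinearMap.range (T : E →ₗ[𝕜] E)) →
      Module.finrank 𝕜 (LinearMap.ker (T : E →ₗ[𝕜] E)) = Module.finrank 𝕜 (E ⧸ LinearMap.range (T : E →ₗ[𝕜] E)))
    (π : (E →L[𝕜] E) →+* Q) (hsurj : Function.Surjective π)
    (hker : ∀ T : E →L[𝕜] E, π T = 0 ↔ IsCompactOperator T)
    (hquot : ∀ (T : E →L[𝕜] E) (r : ℝ), π '' Metric.ball T r = Metric.ball (π T) r)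
    (hdense : Dense {q : Q | IsUnit q}) :
    (∀ T S : E →L[𝕜] E, ∀ ε > 0,
        (interior (Metric.ball T ε * Metric.ball S ε)).Nonempty) ∧
    (∀ a b : Q, ∀ ε > 0,
        (interior (Metric.ball a ε * Metric.ball b ε)).Nonempty) := by
  have hdenseB : Dense {T : E →L[𝕜] E | IsUnit T} :=
    FredholmIndexZero.dense_setOf_isUnit hfred π hsurj (fun T => (hker T).1)
      (fun T r => (hquot T r).ge) hdense
  exact ⟨fun T S _ hε => interior_ball_mul_ball_nonempty_of_dense_isUnit hdenseB T S hε,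
    fun a b _ hε => interior_ball_mul_ball_nonempty_of_dense_isUnit hdense a b hε⟩

/-- Suppose every Fredholm operator on a Banach space `E` has index `0`.  If the
invertible elements of the Calkin algebra `𝓠(E) = 𝓑(E)/𝓚(E)` are dense, then both
`𝓑(E)` and `𝓠(E)` have weakly open multiplication.  The Calkin algebra is modelled as a
Banach algebra `Q` together with a surjective ring homomorphism `π : 𝓑(E) →+* Q` whose
kernel is exactly the ideal of compact operators and which satisfies the quotient-norm
identity `π '' B(T, r) = B(π T, r)`. -/
theorem weakly_open_of_index_zero_and_tsr_one_calkin
    {𝕜 : Type*} [RCLike 𝕜] {E : Type*} [NormedAddCommGroup E] [NormedSpace 𝕜 E]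
    [CompleteSpace E] {Q : Type*} [NormedRing Q] [NormedAlgebra 𝕜 Q] [CompleteSpace Q]
    (hfred : ∀ T : E →L[𝕜] E,
      FiniteDimensional 𝕜 (LinearMap.ker (T : E →ₗ[𝕜] E)) →
      FiniteDimensional 𝕜 (E ⧸ LinearMap.range (T : E →ₗ[𝕜] E)) →
      Module.finrank 𝕜 (LinearMap.ker (T : E →ₗ[𝕜] E)) = Module.finrank 𝕜 (E ⧸ LinearMap.range (T : E →ₗ[𝕜] E)))
    (π : (E →L[𝕜] E) →+* Q) (hsurj : Function.Surjective π)
    (hker : ∀ T : E →L[𝕜] E, π T = 0 ↔ IsCompactOperator T)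
    (hquot : ∀ (T : E →L[𝕜] E) (r : ℝ), π '' Metric.ball T r = Metric.ball (π T) r)
    (hdense : Dense {q : Q | IsUnit q}) :
    (∀ T S : E →L[𝕜] E, ∀ ε > 0,
        (interior (Metric.ball T ε * Metric.ball S ε)).Nonempty) ∧
    (∀ a b : Q, ∀ ε > 0,
        (interior (Metric.ball a ε * Metric.ball b ε)).Nonempty) :=
  weakly_open_of_index_zero_and_tsr_one_calkin_general hfred π hsurj hker hquot hdense
end

section
/- Let E be a complex Banach space with the property that every bounded linear operator T ∈ 𝓑(E) has totally disconnected spectrum (as a subset of ℂ). Then both 𝓑(E) and the Calkin algebra 𝓠(E) = 𝓑(E)/𝓚(E) have weakly open multiplication. -/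
open Pointwise

/-- In any normed ring in which every ball contains a unit, multiplication is
weakly open. -/
lemma weakly_open_of_units_dense
    {A : Type*} [NormedRing A]
    (h : ∀ a : A, ∀ ε : ℝ, 0 < ε → ∃ u : A, IsUnit u ∧ u ∈ Metric.ball a ε) :
    ∀ a b : A, ∀ ε > 0, (interior (Metric.ball a ε * Metric.ball b ε)).Nonempty := by
  intro a b ε hε
  obtain ⟨u, hu, hua⟩ := h a ε hε
  set w : A := (↑hu.unit⁻¹ : A) with hw
  have hwu : w * u = 1 := hu.val_inv_mul
  have huw : u * w = 1 := hu.mul_val_inv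
  set S : Set A := (fun x => w * x) ⁻¹' Metric.ball b ε with hS
  have hopen : IsOpen S :=
    Metric.isOpen_ball.preimage (continuous_const.mul continuous_id)
  have hne : (u * b) ∈ S := by
    have : w * (u * b) = b := by rw [← mul_assoc, hwu, one_mul]
    simp only [hS, Set.mem_preimage, this]
    exact Metric.mem_ball_self hε
  have hsubset : S ⊆ Metric.ball a ε * Metric.ball b ε := by
    intro x hx
    have hx' : w * x ∈ Metric.ball b ε := hx
    have hxeq : u * (w * x) = x := by rw [← mul_assoc, huw, one_mul]
    exact hxeq ▸ Set.mul_mem_mul hua hx'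
  exact ⟨u * b, interior_maximal hsubset hopen hne⟩

/-- If the spectrum of `T` is totally disconnected, then arbitrarily close to `0`
there are points `lam` outside the spectrum, so `T - lam • 1` is invertible. -/
lemma exists_small_resolvent
    {E : Type*} [NormedAddCommGroup E] [NormedSpace ℂ E] [CompleteSpace E]
    (T : E →L[ℂ] E) (hT : IsTotallyDisconnected (spectrum ℂ T))
    {ε : ℝ} (hε : 0 < ε) :
    ∃ lam : ℂ, ‖lam‖ < ε ∧ IsUnit (T - algebraMap ℂ (E →L[ℂ] E) lam) := by
  have hnot : ¬ (Metric.ball (0 : ℂ) ε ⊆ spectrum ℂ T) := by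
    intro hsub
    have hpre : IsPreconnected (Metric.ball (0 : ℂ) ε) :=
      (convex_ball (0 : ℂ) ε).isPreconnected
    have hsub2 : (Metric.ball (0 : ℂ) ε).Subsingleton := hT _ hsub hpre
    have h0 : (0 : ℂ) ∈ Metric.ball (0 : ℂ) ε := Metric.mem_ball_self hε
    have h1 : ((ε / 2 : ℝ) : ℂ) ∈ Metric.ball (0 : ℂ) ε := by
      rw [Metric.mem_ball, dist_zero_right, Complex.norm_real, Real.norm_eq_abs,
        abs_of_pos (by linarith)]
      linarith
    have := hsub2 h1 h0
    have hε2 : (ε / 2 : ℝ) = 0 := by exact_mod_cast this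
    linarith
  obtain ⟨lam, hlam, hlam'⟩ := Set.not_subset.mp hnot
  refine ⟨lam, by simpa [Complex.dist_eq] using hlam, ?_⟩
  have := spectrum.notMem_iff.mp hlam'
  have h2 : IsUnit (-(algebraMap ℂ (E →L[ℂ] E) lam - T)) := this.neg
  rwa [neg_sub] at h2

/-- If every bounded operator on a complex Banach space `E` has totally disconnected
spectrum, then both `𝓑(E)` and the Calkin algebra `𝓠(E) = 𝓑(E)/𝓚(E)` have weakly open
multiplication.  The Calkin algebra is modelled as a complex Banach algebra `Q` together
with a surjective ring homomorphism `π : 𝓑(E) →+* Q` whose kernel is exactly the ideal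
of compact operators and which satisfies the quotient-norm identity
`π '' B(T, r) = B(π T, r)`. -/
theorem weakly_open_of_totallyDisconnected_spectra
    {E : Type*} [NormedAddCommGroup E] [NormedSpace ℂ E] [CompleteSpace E]
    {Q : Type*} [NormedRing Q] [NormedAlgebra ℂ Q] [CompleteSpace Q]
    (hspec : ∀ T : E →L[ℂ] E, IsTotallyDisconnected (spectrum ℂ T))
    (π : (E →L[ℂ] E) →+* Q) (hsurj : Function.Surjective π)
    (hker : ∀ T : E →L[ℂ] E, π T = 0 ↔ IsCompactOperator T)
    (hquot : ∀ (T : E →L[ℂ] E) (r : ℝ), π '' Metric.ball T r = Metric.ball (π T) r) :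
    (∀ T S : E →L[ℂ] E, ∀ ε > 0,
        (interior (Metric.ball T ε * Metric.ball S ε)).Nonempty) ∧
    (∀ a b : Q, ∀ ε > 0,
        (interior (Metric.ball a ε * Metric.ball b ε)).Nonempty) := by
  have key : ∀ (T : E →L[ℂ] E) (ε : ℝ), 0 < ε →
      T - algebraMap ℂ (E →L[ℂ] E) 0 ∈ Metric.ball T ε := by
    intro T ε hε
    simp [Metric.mem_ball, hε]
  have hball : ∀ (T : E →L[ℂ] E) {lam : ℂ} {ε : ℝ}, ‖lam‖ < ε →
      T - algebraMap ℂ (E →L[ℂ] E) lam ∈ Metric.ball T ε := by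
    intro T lam ε hlam
    rw [Metric.mem_ball, dist_eq_norm, sub_sub_cancel_left, norm_neg,
      Algebra.algebraMap_eq_smul_one, norm_smul]
    calc ‖lam‖ * ‖(1 : E →L[ℂ] E)‖ ≤ ‖lam‖ * 1 := by
          apply mul_le_mul_of_nonneg_left ?_ (norm_nonneg _)
          rw [ContinuousLinearMap.one_def]
          exact ContinuousLinearMap.norm_id_le
      _ = ‖lam‖ := mul_one _
      _ < ε := hlam
  constructor
  · apply weakly_open_of_units_dense
    intro T ε hε
    obtain ⟨lam, hlam, hu⟩ := exists_small_resolvent T (hspec T) hε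
    exact ⟨_, hu, hball T hlam⟩
  · apply weakly_open_of_units_dense
    intro a ε hε
    obtain ⟨T, rfl⟩ := hsurj a
    obtain ⟨lam, hlam, hu⟩ := exists_small_resolvent T (hspec T) hε
    refine ⟨π (T - algebraMap ℂ (E →L[ℂ] E) lam), hu.map π, ?_⟩
    rw [← hquot T ε]
    exact ⟨_, hball T hlam, rfl⟩
end

section
/- Let E be a complex Banach space and let 𝓚♯(E) denote the unital subalgebra of 𝓑(E) generated by the compact operators, i.e., 𝓚♯(E) = {λ·id_E + K : λ ∈ ℂ, K ∈ 𝓚(E)}, regarded as a Banach algebra with the operator norm. Then the set of invertible elements of 𝓚♯(E) is dense in 𝓚♯(E) (i.e., tsr 𝓚♯(E) = 1), and consequently multiplication in 𝓚♯(E) is weakly open. -/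
/-!
Every nonzero point of the spectrum of a compact operator `K` is an eigenvalue (Fredholm
alternative), and for each `δ > 0` only finitely many eigenvalues have modulus at least `δ`:
otherwise Riesz's lemma, applied to the flag spanned by eigenvectors, yields a bounded sequence
whose images under `K` are pairwise `1`-separated. So the spectrum of `K` is countable, and
`λ • 1 + K` is invertible for a dense set of `λ ≠ 0`; its inverse
`λ⁻¹ • 1 - λ⁻¹ • K (λ • 1 + K)⁻¹` lies in `𝓚♯(E)` again. Once units are dense, a unit
`u ∈ B(x, ε)` makes `u · B(y, ε)` an open subset of `B(x, ε) · B(y, ε)`.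
-/

open Pointwise

set_option synthInstance.maxHeartbeats 800000

/-- The unital subalgebra `𝓚♯(E) = {λ·id + K : λ ∈ ℂ, K compact}` of `𝓑(E)` generated by
the compact operators on a complex Banach space `E`. -/
noncomputable def KSharp (E : Type*) [NormedAddCommGroup E] [NormedSpace ℂ E] :
    Subalgebra ℂ (E →L[ℂ] E) where
  carrier := {T | ∃ (c : ℂ) (K : E →L[ℂ] E),
    IsCompactOperator K ∧ T = c • (1 : E →L[ℂ] E) + K}
  mul_mem' := by
    rintro T S ⟨c, K, hK, rfl⟩ ⟨d, L, hL, rfl⟩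
    refine ⟨c * d, c • L + d • K + K * L, ?_, ?_⟩
    · have h1 : IsCompactOperator (⇑(c • L) : E → E) := by
        have := hL.smul c
        simpa using this
      have h2 : IsCompactOperator (⇑(d • K) : E → E) := by
        have := hK.smul d
        simpa using this
      have h3 : IsCompactOperator (⇑(K * L) : E → E) := by
        have := hK.comp_clm L
        simpa [Function.comp] using this
      simpa using (h1.add h2).add h3
    · simp only [mul_add, add_mul, smul_mul_assoc, mul_smul_comm, one_mul, mul_one,
        smul_add, smul_smul, mul_comm d c]
      abel
  add_mem' := by
    rintro T S ⟨c, K, hK, rfl⟩ ⟨d, L, hL, rfl⟩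
    refine ⟨c + d, K + L, ?_, ?_⟩
    · have := hK.add hL
      simpa using this
    · simp only [add_smul]
      abel
  algebraMap_mem' := fun r =>
    ⟨r, 0, isCompactOperator_zero, by simp [Algebra.algebraMap_eq_smul_one]⟩


open Module End Set

section EigenvectorFlag

variable {R M : Type*} [CommRing R] [AddCommGroup M] [Module R M] {f : M →ₗ[R] M}
  {μ : ℕ → R} {v : ℕ → M}

theorem span_image_Iio_le_comap_of_apply_eq_smul (hv : ∀ i, f (v i) = μ i • v i) (n : ℕ) :
    Submodule.span R (v '' Iio n) ≤ (Submodule.span R (v '' Iio n)).comap f :=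
  Submodule.span_le.mpr <| by
    rintro _ ⟨i, hi, rfl⟩
    simpa [hv] using Submodule.smul_mem _ (μ i) (Submodule.subset_span (mem_image_of_mem v hi))

theorem span_image_Iio_succ_le_comap_smul_sub (hv : ∀ i, f (v i) = μ i • v i) (n : ℕ) :
    Submodule.span R (v '' Iio (n + 1)) ≤
      (Submodule.span R (v '' Iio n)).comap (μ n • LinearMap.id - f) :=
  Submodule.span_le.mpr <| by
    rintro _ ⟨i, hi, rfl⟩
    have hvi : (μ n • LinearMap.id - f : M →ₗ[R] M) (v i) = (μ n - μ i) • v i := by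
      simp [hv, sub_smul]
    rcases (Nat.lt_succ_iff.mp hi).lt_or_eq with hin | rfl
    · simpa [hvi] using Submodule.smul_mem _ (μ n - μ i)
        (Submodule.subset_span (mem_image_of_mem v (mem_Iio.mpr hin)))
    · simp [hvi]

end EigenvectorFlag

theorem riesz_lemma_of_norm_lt_of_lt {𝕜 E : Type*} [NontriviallyNormedField 𝕜]
    [NormedAddCommGroup E] [NormedSpace 𝕜 E] {F G : Submodule 𝕜 E} (hF : IsClosed (F : Set E))
    (hFG : F < G) {c : 𝕜} (hc : 1 < ‖c‖) {R : ℝ} (hR : ‖c‖ < R) :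
    ∃ x ∈ G, ‖x‖ ≤ R ∧ ∀ y ∈ F, 1 ≤ ‖x - y‖ := by
  obtain ⟨x, hxG, hxF⟩ := SetLike.exists_of_lt hFG
  obtain ⟨x₀, hx₀R, hx₀F⟩ := riesz_lemma_of_norm_lt hc hR (F := F.comap G.subtype)
    (hF.preimage continuous_subtype_val) ⟨⟨x, hxG⟩, hxF⟩
  exact ⟨x₀, x₀.2, hx₀R, fun y hy ↦ hx₀F ⟨y, hFG.le hy⟩ hy⟩

namespace IsCompactOperator

variable {𝕜 X : Type*} [NontriviallyNormedField 𝕜] [NormedAddCommGroup X] [NormedSpace 𝕜 X]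
  {T : X →L[𝕜] X}

theorem exists_lt_norm_sub_apply_lt (hT : IsCompactOperator T)
    {y : ℕ → X} {R : ℝ} (hy : ∀ n, ‖y n‖ ≤ R) {ε : ℝ} (hε : 0 < ε) :
    ∃ m n, m < n ∧ ‖T (y n) - T (y m)‖ < ε := by
  obtain ⟨C, hC, hTC⟩ := hT.image_closedBall_subset_compact R
  obtain ⟨z, -, φ, hφ, hφz⟩ :=
    hC.tendsto_subseq fun n ↦ hTC ⟨y n, by simpa using hy n, rfl⟩
  obtain ⟨N, hN⟩ := Metric.cauchySeq_iff'.mp hφz.cauchySeq ε hε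
  exact ⟨φ N, φ (N + 1), hφ N.lt_succ_self, by simpa [dist_eq_norm] using hN (N + 1) N.le_succ⟩

theorem finite_setOf_le_norm_hasEigenvalue [CompleteSpace 𝕜] (hT : IsCompactOperator T)
    {δ : ℝ} (hδ : 0 < δ) : {μ : 𝕜 | δ ≤ ‖μ‖ ∧ HasEigenvalue (T : End 𝕜 X) μ}.Finite := by
  refine Set.not_infinite.mp fun hinf ↦ ?_
  set μ : ℕ → 𝕜 := fun n ↦ Set.Infinite.natEmbedding _ hinf n
  have hμ_inj : Function.Injective μ := fun m n h ↦ (hinf.natEmbedding _).injective (Subtype.ext h)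
  have hμ_eig : ∀ n, δ ≤ ‖μ n‖ ∧ HasEigenvalue (T : End 𝕜 X) (μ n) := fun n ↦
    (hinf.natEmbedding _ n).2
  choose v hv using fun n ↦ (hμ_eig n).2.exists_hasEigenvector
  have hTv : ∀ n, (T : X →ₗ[𝕜] X) (v n) = μ n • v n := fun n ↦ (hv n).apply_eq_smul
  set F : ℕ → Submodule 𝕜 X := fun n ↦ Submodule.span 𝕜 (v '' Iio n)
  have hF_mono : Monotone F := fun m n hmn ↦
    Submodule.span_mono (image_mono (Iio_subset_Iio hmn))
  have hF_lt : ∀ n, F n < F (n + 1) := fun n ↦ SetLike.lt_iff_le_and_exists.mpr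
    ⟨hF_mono n.le_succ, v n, Submodule.subset_span (mem_image_of_mem v n.lt_succ_self),
      (eigenvectors_linearIndependent' _ μ hμ_inj v hv).notMem_span_image (by simp)⟩
  have hF_closed : ∀ n, IsClosed (F n : Set X) := fun n ↦
    haveI := FiniteDimensional.span_of_finite 𝕜 ((finite_Iio n).image v)
    Submodule.closed_of_finiteDimensional _
  obtain ⟨c, hc⟩ := NormedField.exists_one_lt_norm 𝕜
  choose u huF hu hu_far using fun n ↦
    riesz_lemma_of_norm_lt_of_lt (hF_closed n) (hF_lt n) hc (lt_add_one ‖c‖)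
  have hy : ∀ n, ‖(μ n)⁻¹ • u n‖ ≤ (‖c‖ + 1) / δ := fun n ↦ by
    rw [norm_smul, norm_inv, inv_mul_eq_div]
    gcongr
    exacts [hu n, (hμ_eig n).1]
  obtain ⟨m, n, hmn, hlt⟩ := hT.exists_lt_norm_sub_apply_lt hy one_pos
  have hw : (μ n)⁻¹ • (μ n • u n - T (u n)) + (μ m)⁻¹ • T (u m) ∈ F n := by
    refine Submodule.add_mem _ (Submodule.smul_mem _ _ ?_) (Submodule.smul_mem _ _ ?_)
    · simpa using span_image_Iio_succ_le_comap_smul_sub hTv n (huF n)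
    · exact hF_mono hmn (span_image_Iio_le_comap_of_apply_eq_smul hTv (m + 1) (huF m))
  have hμn : μ n ≠ 0 := norm_pos_iff.mp (hδ.trans_le (hμ_eig n).1)
  have hdiff : T ((μ n)⁻¹ • u n) - T ((μ m)⁻¹ • u m) =
      u n - ((μ n)⁻¹ • (μ n • u n - T (u n)) + (μ m)⁻¹ • T (u m)) := by
    rw [map_smul, map_smul, smul_sub, inv_smul_smul₀ hμn]
    abel
  exact hlt.not_ge (hdiff ▸ hu_far n _ hw)

theorem countable_spectrum [CompleteSpace 𝕜] [CompleteSpace X] (hT : IsCompactOperator T) :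
    (spectrum 𝕜 T).Countable := by
  refine ((countable_singleton 0).union (countable_iUnion fun n : ℕ ↦
    (hT.finite_setOf_le_norm_hasEigenvalue (Nat.one_div_pos_of_nat (n := n))).countable)).mono ?_
  intro μ hμ
  rcases eq_or_ne μ 0 with rfl | hμ0
  · exact Or.inl rfl
  obtain ⟨n, hn⟩ := exists_nat_one_div_lt (norm_pos_iff.mpr hμ0)
  exact Or.inr (mem_iUnion.mpr ⟨n, hn.le, (hasEigenvalue_iff_mem_spectrum hT hμ0).mpr hμ⟩)

theorem dense_setOf_ne_zero_isUnit_smul_one_add [CompleteSpace 𝕜] [CompleteSpace X]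
    (hT : IsCompactOperator T) : Dense {c : 𝕜 | c ≠ 0 ∧ IsUnit (c • 1 + T)} := by
  refine ((countable_spectrum (T := -T) hT.neg).insert 0 |>.dense_compl 𝕜).mono fun c hc ↦ ?_
  rw [mem_compl_iff, mem_insert_iff, not_or, spectrum.notMem_iff, Algebra.algebraMap_eq_smul_one,
    sub_neg_eq_add] at hc
  exact hc

end IsCompactOperator

theorem interior_mul_nonempty_of_dense_isUnit {M : Type*} [Monoid M] [TopologicalSpace M]
    [ContinuousMul M] (hM : Dense {a : M | IsUnit a}) {U V : Set M} (hU : IsOpen U)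
    (hU₀ : U.Nonempty) (hV : IsOpen V) (hV₀ : V.Nonempty) : (interior (U * V)).Nonempty := by
  obtain ⟨_, hu, u, rfl⟩ := hM.inter_open_nonempty U hU hU₀
  obtain ⟨y, hy⟩ := hV₀
  have hsub : ((↑u⁻¹ : M) * ·) ⁻¹' V ⊆ U * V := fun z hz ↦ by
    simpa using Set.mul_mem_mul hu (show ↑u⁻¹ * z ∈ V from hz)
  exact ⟨u * y, interior_maximal hsub (hV.preimage (continuous_const_mul _)) (by simpa using hy)⟩

section KSharp

variable {E : Type*} [NormedAddCommGroup E] [NormedSpace ℂ E]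

theorem mem_KSharp_of_smul_one_add_mul_eq_one {c : ℂ} (hc : c ≠ 0) {K V : E →L[ℂ] E}
    (hK : IsCompactOperator K) (hV : (c • 1 + K) * V = 1) : V ∈ KSharp E := by
  refine ⟨c⁻¹, -c⁻¹ • (K * V), (hK.comp_clm V).smul _, ?_⟩
  rw [add_mul, smul_mul_assoc, one_mul] at hV
  calc V = c⁻¹ • (c • V) := (inv_smul_smul₀ hc V).symm
    _ = _ := by rw [eq_sub_of_add_eq hV, smul_sub, neg_smul, sub_eq_add_neg]

theorem isUnit_KSharp_smul_one_add {c : ℂ} (hc : c ≠ 0) {K : E →L[ℂ] E}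
    (hK : IsCompactOperator K) (hu : IsUnit (c • 1 + K)) :
    IsUnit (⟨c • 1 + K, c, K, hK, rfl⟩ : KSharp E) := by
  obtain ⟨u, hu⟩ := hu
  have hinv : (c • 1 + K) * ↑u⁻¹ = 1 := by rw [← hu]; exact u.mul_inv
  have hinv' : ↑u⁻¹ * (c • 1 + K) = 1 := by rw [← hu]; exact u.inv_mul
  exact ⟨⟨_, ⟨_, mem_KSharp_of_smul_one_add_mul_eq_one hc hK hinv⟩, Subtype.ext hinv,
    Subtype.ext hinv'⟩, rfl⟩

theorem dense_setOf_isUnit_KSharp [CompleteSpace E] : Dense {a : KSharp E | IsUnit a} := by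
  refine Metric.dense_iff.mpr fun x r hr ↦ ?_
  obtain ⟨c, K, hK, hx⟩ := x.2
  obtain ⟨c', ⟨hc'0, hc'⟩, hcc'⟩ := hK.dense_setOf_ne_zero_isUnit_smul_one_add.exists_dist_lt c hr
  refine ⟨_, ?_, isUnit_KSharp_smul_one_add hc'0 hK hc'⟩
  calc dist (⟨c' • 1 + K, c', K, hK, rfl⟩ : KSharp E) x = ‖(c' - c) • (1 : E →L[ℂ] E)‖ := by
        rw [Subtype.dist_eq, hx, dist_eq_norm, add_sub_add_right_eq_sub, sub_smul]
    _ ≤ ‖c' - c‖ := (norm_smul_le (c' - c) (1 : E →L[ℂ] E)).trans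
        (mul_le_of_le_one_right (norm_nonneg _) ContinuousLinearMap.norm_id_le)
    _ < r := by rwa [← dist_eq_norm, dist_comm]

end KSharp

/-- The unital subalgebra `𝓚♯(E)` of `𝓑(E)` generated by the compact operators has dense
invertibles (topological stable rank one), and consequently weakly open multiplication. -/
theorem KSharp_tsr_one_and_weakly_open
    (E : Type*) [NormedAddCommGroup E] [NormedSpace ℂ E] [CompleteSpace E] :
    Dense {a : KSharp E | IsUnit a} ∧
    ∀ x y : KSharp E, ∀ ε > 0,
      (interior (Metric.ball x ε * Metric.ball y ε)).Nonempty :=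
  ⟨dense_setOf_isUnit_KSharp, fun x y _ hε ↦
    interior_mul_nonempty_of_dense_isUnit dense_setOf_isUnit_KSharp Metric.isOpen_ball
      ⟨x, Metric.mem_ball_self hε⟩ Metric.isOpen_ball ⟨y, Metric.mem_ball_self hε⟩⟩
end
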